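/- arXiv:1209.1729 — 5 statements merged into one kernel-verified Lean document; each statement's English description precedes it below -/
import Mathlib

section
/- The linear infinite-dimensional backstepping transformation and its claimed inverse are mutually inverse: let A be a real n x n matrix, B in R^n, K a 1 x n row vector, and D_hat > 0. For any X in R^n and any continuous function u_hat : [0,1] -> R, define w_hat(x) = u_hat(x) - K e^{A D_hat x} X - D_hat * integral from 0 to x of K e^{A D_hat (x - y)} B u_hat(y) dy for x in [0,1]. Then for all x in [0,1] it holds that u_hat(x) = w_hat(x) + K e^{(A + B K) D_hat x} X + D_hat * integral from 0 to x of K e^{(A + B K) D_hat (x - y)} B w_hat(y) dy. Conversely, if w_hat : [0,1] -> R is continuous and u_hat is defined from w_hat by the second formula, then w_hat is recovered from u_hat by the first formula. -/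
/-!
The predicted state `P(x) = e^{DAx} X + D ∫₀ˣ e^{DA(x-y)} B u(y) dy` is the solution of
`P' = D (A P + B u)`, `P 0 = X`. When `u = w + K ⬝ᵥ P`, the same `P` solves
`P' = D ((A + B K) P + B w)`, so by uniqueness for linear ODEs it is also the predicted state
of `w` for the closed-loop matrix `A + B K`. Read in either direction, this identity gives
one half of the theorem. Inputs given only on `[0, 1]` are first extended continuously to `ℝ`,
which changes none of the integrals over `[0, x]`.
-/

open Matrix MeasureTheory intervalIntegral Set NormedSpace

noncomputable section

attribute [local instance] Matrix.linftyOpNormedRing Matrix.linftyOpNormedAlgebra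

variable {ι : Type*} [Fintype ι] [DecidableEq ι]

theorem Matrix.exp_mul_exp_neg (M : Matrix ι ι ℝ) : exp M * exp (-M) = 1 := by
  rw [← Matrix.exp_add_of_commute _ _ (Commute.refl M).neg_right, add_neg_cancel, exp_zero]

theorem Matrix.exp_sub_smul (M : Matrix ι ι ℝ) (s t : ℝ) :
    exp ((s - t) • M) = exp (s • M) * exp (-(t • M)) := by
  rw [sub_smul, sub_eq_add_neg, Matrix.exp_add_of_commute]
  exact ((Commute.refl M).smul_left s |>.smul_right t).neg_right

theorem hasDerivAt_exp_smul_mulVec {M : Matrix ι ι ℝ} {v : ℝ → ι → ℝ} {v' : ι → ℝ} {x : ℝ}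
    (hv : HasDerivAt v v' x) :
    HasDerivAt (fun t => exp (t • M) *ᵥ v t) (M *ᵥ (exp (x • M) *ᵥ v x) + exp (x • M) *ᵥ v') x := by
  have h := (mulVecBilin ℝ ℝ).toContinuousBilinearMap.hasDerivAt_of_bilinear
    (fun _ => hasDerivAt_exp_smul_const' (𝕂 := ℝ) M x) (fun _ => hv)
  simp only [LinearMap.toContinuousBilinearMap_apply, mulVecBilin_apply, ← mulVec_mulVec] at h
  exact h.congr_deriv (add_comm _ _)

/-- Variation of constants: the solution of `Y' = M Y + u b`, `Y 0 = X`. -/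
def linearFlow (M : Matrix ι ι ℝ) (b X : ι → ℝ) (u : ℝ → ℝ) (x : ℝ) : ι → ℝ :=
  exp (x • M) *ᵥ (X + ∫ y in (0 : ℝ)..x, u y • exp (-(y • M)) *ᵥ b)

section LinearFlow

variable {M : Matrix ι ι ℝ} {b X : ι → ℝ} {u w : ℝ → ℝ}

@[simp]
theorem linearFlow_zero : linearFlow M b X u 0 = X := by
  simp [linearFlow]

theorem continuous_smul_exp_neg_smul_mulVec (hu : Continuous u) :
    Continuous fun y => u y • exp (-(y • M)) *ᵥ b := by
  fun_prop

theorem hasDerivAt_linearFlow (hu : Continuous u) (x : ℝ) :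
    HasDerivAt (linearFlow M b X u) (M *ᵥ linearFlow M b X u x + u x • b) x := by
  have hI := ((continuous_smul_exp_neg_smul_mulVec (M := M) (b := b) hu).integral_hasStrictDerivAt
    0 x).hasDerivAt.const_add X
  refine (hasDerivAt_exp_smul_mulVec hI).congr_deriv ?_
  rw [mulVec_smul, mulVec_mulVec b, Matrix.exp_mul_exp_neg, one_mulVec]
  rfl

theorem eq_linearFlow_of_hasDerivAt {Y : ℝ → ι → ℝ} (hu : Continuous u) (hY₀ : Y 0 = X)
    (hY : ∀ x, HasDerivAt Y (M *ᵥ Y x + u x • b) x) : Y = linearFlow M b X u := by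
  have hG : ∀ x, HasDerivAt
      (fun t => exp (-(t • M)) *ᵥ Y t - ∫ y in (0 : ℝ)..t, u y • exp (-(y • M)) *ᵥ b) 0 x := by
    intro x
    have hE := hasDerivAt_exp_smul_mulVec (M := -M) (hY x)
    simp only [smul_neg] at hE
    refine (hE.sub ((continuous_smul_exp_neg_smul_mulVec hu).integral_hasStrictDerivAt
      0 x).hasDerivAt).congr_deriv ?_
    have hcomm : Commute M (exp (-(x • M))) := ((Commute.refl M).smul_right x).neg_right.exp_right
    rw [mulVec_add, mulVec_mulVec (Y x) _ M, ← hcomm.eq, ← mulVec_mulVec, neg_mulVec, mulVec_smul]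
    abel
  funext x
  have hconst := is_const_of_deriv_eq_zero (fun t => (hG t).differentiableAt)
    (fun t => (hG t).deriv) x 0
  simp only [zero_smul, neg_zero, exp_zero, one_mulVec, hY₀, integral_same, sub_zero] at hconst
  rw [linearFlow, ← hconst, sub_add_cancel, mulVec_mulVec, Matrix.exp_mul_exp_neg, one_mulVec]

theorem forall_eq_add_dotProduct_linearFlow_iff (K : ι → ℝ) (hu : Continuous u)
    (hw : Continuous w) :
    (∀ x, u x = w x + K ⬝ᵥ linearFlow M b X u x) ↔
      ∀ x, u x = w x + K ⬝ᵥ linearFlow (M + vecMulVec b K) b X w x := by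
  have hclosed (y : ι → ℝ) (c : ℝ) :
      (M + vecMulVec b K) *ᵥ y + c • b = M *ᵥ y + (c + K ⬝ᵥ y) • b := by
    rw [add_mulVec, vecMulVec_mulVec, op_smul_eq_smul, add_smul]
    abel
  constructor
  · intro h x
    have hflow : linearFlow M b X u = linearFlow (M + vecMulVec b K) b X w :=
      eq_linearFlow_of_hasDerivAt hw linearFlow_zero fun t =>
        (hasDerivAt_linearFlow hu t).congr_deriv (by rw [hclosed, ← h t])
    rw [← hflow]
    exact h x
  · intro h x
    have hflow : linearFlow (M + vecMulVec b K) b X w = linearFlow M b X u :=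
      eq_linearFlow_of_hasDerivAt hu linearFlow_zero fun t =>
        (hasDerivAt_linearFlow hw t).congr_deriv (by rw [hclosed, ← h t])
    rw [← hflow]
    exact h x

theorem dotProduct_linearFlow (K : ι → ℝ) (hu : Continuous u) (x : ℝ) :
    K ⬝ᵥ linearFlow M b X u x =
      K ⬝ᵥ exp (x • M) *ᵥ X + ∫ y in (0 : ℝ)..x, (K ⬝ᵥ exp ((x - y) • M) *ᵥ b) * u y := by
  let L := (dotProductBilin ℝ ℝ (K ᵥ* exp (x • M))).toContinuousLinearMap
  have hL := L.intervalIntegral_comp_comm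
    ((continuous_smul_exp_neg_smul_mulVec (M := M) (b := b) hu).intervalIntegrable
      (μ := volume) 0 x)
  rw [linearFlow, mulVec_add, dotProduct_add, dotProduct_mulVec _ _ (∫ _ in _.._, _)]
  simp only [L, LinearMap.coe_toContinuousLinearMap', dotProductBilin_apply_apply] at hL
  rw [← hL]
  congr 1
  refine integral_congr fun y _ => ?_
  rw [Matrix.exp_sub_smul, ← mulVec_mulVec, ← dotProduct_mulVec, mulVec_smul, dotProduct_smul,
    smul_eq_mul, mul_comm]

theorem continuous_linearFlow (hu : Continuous u) : Continuous (linearFlow M b X u) :=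
  continuous_iff_continuousAt.2 fun x => (hasDerivAt_linearFlow hu x).continuousAt

end LinearFlow

/-- `K ⬝ᵥ P(x)` for the predicted state `P`; the backstepping transformation is `w = u - K ⬝ᵥ P`. -/
def predictorFeedback (A : Matrix ι ι ℝ) (B K X : ι → ℝ) (D : ℝ) (u : ℝ → ℝ) (x : ℝ) : ℝ :=
  K ⬝ᵥ exp ((D * x) • A) *ᵥ X + D * ∫ y in (0 : ℝ)..x, (K ⬝ᵥ exp ((D * (x - y)) • A) *ᵥ B) * u y

section PredictorFeedback

variable (A : Matrix ι ι ℝ) (B K X : ι → ℝ) (D : ℝ) {u w : ℝ → ℝ}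

theorem predictorFeedback_eq_dotProduct_linearFlow (hu : Continuous u) (x : ℝ) :
    predictorFeedback A B K X D u x = K ⬝ᵥ linearFlow (D • A) (D • B) X u x := by
  rw [dotProduct_linearFlow K hu, predictorFeedback, ← intervalIntegral.integral_const_mul]
  simp only [smul_smul, mulVec_smul, dotProduct_smul, smul_eq_mul, mul_assoc, mul_comm _ D]

theorem continuous_predictorFeedback (hu : Continuous u) :
    Continuous (predictorFeedback A B K X D u) := by
  simp only [funext (predictorFeedback_eq_dotProduct_linearFlow A B K X D hu)]
  exact continuous_const.dotProduct (continuous_linearFlow hu)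

theorem predictorFeedback_congr {v : ℝ → ℝ} {x : ℝ} (h : EqOn u v (uIcc 0 x)) :
    predictorFeedback A B K X D u x = predictorFeedback A B K X D v x := by
  simp only [predictorFeedback]
  congr 2
  exact integral_congr fun y hy => by simp only [h hy]

theorem forall_eq_sub_predictorFeedback_iff (hu : Continuous u) (hw : Continuous w) :
    (∀ x, w x = u x - predictorFeedback A B K X D u x) ↔
      ∀ x, u x = w x + predictorFeedback (A + vecMulVec B K) B K X D w x := by
  have hgain : D • (A + vecMulVec B K) = D • A + vecMulVec (D • B) K := by
    rw [smul_add, smul_vecMulVec]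
  simp only [predictorFeedback_eq_dotProduct_linearFlow _ _ _ _ _ hu,
    predictorFeedback_eq_dotProduct_linearFlow _ _ _ _ _ hw, hgain,
    ← forall_eq_add_dotProduct_linearFlow_iff K hu hw, eq_sub_iff_add_eq, eq_comm (b := u _)]

end PredictorFeedback

theorem ContinuousOn.exists_continuous_eqOn_Icc {α β : Type*} [LinearOrder α] [TopologicalSpace α]
    [OrderTopology α] [TopologicalSpace β] {a b : α} {f : α → β} (hf : ContinuousOn f (Icc a b))
    (hab : a ≤ b) : ∃ g, Continuous g ∧ EqOn g f (Icc a b) :=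
  ⟨IccExtend hab ((Icc a b).domRestrict f), continuous_IccExtend_iff.2 hf.domRestrict,
    fun _ hx => IccExtend_of_mem hab _ hx⟩

theorem backstepping_transformations_mutually_inverse_general
    (n : ℕ) (A : Matrix (Fin n) (Fin n) ℝ) (B K : Fin n → ℝ) (D : ℝ)
    (X : Fin n → ℝ) :
    -- direct transformation followed by the inverse transformation
    (∀ uh : ℝ → ℝ, ContinuousOn uh (Icc 0 1) →
      ∀ wh : ℝ → ℝ,
        (∀ x ∈ Icc (0 : ℝ) 1,
          wh x = uh x - K ⬝ᵥ (NormedSpace.exp ((D * x) • A)).mulVec X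
            - D * ∫ y in (0 : ℝ)..x,
                (K ⬝ᵥ (NormedSpace.exp ((D * (x - y)) • A)).mulVec B) * uh y) →
        ∀ x ∈ Icc (0 : ℝ) 1,
          uh x = wh x
            + K ⬝ᵥ (NormedSpace.exp ((D * x) • (A + vecMulVec B K))).mulVec X
            + D * ∫ y in (0 : ℝ)..x,
                (K ⬝ᵥ (NormedSpace.exp
                  ((D * (x - y)) • (A + vecMulVec B K))).mulVec B) * wh y)
    ∧
    -- inverse transformation followed by the direct transformation
    (∀ wh : ℝ → ℝ, ContinuousOn wh (Icc 0 1) →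
      ∀ uh : ℝ → ℝ,
        (∀ x ∈ Icc (0 : ℝ) 1,
          uh x = wh x
            + K ⬝ᵥ (NormedSpace.exp ((D * x) • (A + vecMulVec B K))).mulVec X
            + D * ∫ y in (0 : ℝ)..x,
                (K ⬝ᵥ (NormedSpace.exp
                  ((D * (x - y)) • (A + vecMulVec B K))).mulVec B) * wh y) →
        ∀ x ∈ Icc (0 : ℝ) 1,
          wh x = uh x - K ⬝ᵥ (NormedSpace.exp ((D * x) • A)).mulVec X
            - D * ∫ y in (0 : ℝ)..x,
                (K ⬝ᵥ (NormedSpace.exp ((D * (x - y)) • A)).mulVec B) * uh y) := by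
  have hsub {x : ℝ} (hx : x ∈ Icc (0 : ℝ) 1) : uIcc 0 x ⊆ Icc 0 1 :=
    uIcc_subset_Icc ⟨le_rfl, zero_le_one⟩ hx
  refine ⟨fun uh huh wh hwh x hx => ?_, fun wh hwh uh huh x hx => ?_⟩
  · obtain ⟨u, hu, hu_eq⟩ := huh.exists_continuous_eqOn_Icc zero_le_one
    have hw_eq : EqOn (u - predictorFeedback A B K X D u) wh (Icc 0 1) := fun t ht => by
      rw [hwh t ht, sub_sub, Pi.sub_apply, hu_eq ht,
        predictorFeedback_congr A B K X D (hu_eq.mono (hsub ht))]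
      rfl
    have key := (forall_eq_sub_predictorFeedback_iff A B K X D hu
      (hu.sub (continuous_predictorFeedback A B K X D hu))).1 (fun _ => rfl) x
    rw [add_assoc, ← hu_eq hx, key, hw_eq hx]
    exact congrArg _ (predictorFeedback_congr _ B K X D (hw_eq.mono (hsub hx)))
  · obtain ⟨w, hw, hw_eq⟩ := hwh.exists_continuous_eqOn_Icc zero_le_one
    have hu_eq : EqOn (w + predictorFeedback (A + vecMulVec B K) B K X D w) uh (Icc 0 1) :=
      fun t ht => by
        rw [huh t ht, add_assoc, Pi.add_apply, hw_eq ht,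
          predictorFeedback_congr _ B K X D (hw_eq.mono (hsub ht))]
        rfl
    have key := (forall_eq_sub_predictorFeedback_iff A B K X D
      (hw.add (continuous_predictorFeedback _ B K X D hw)) hw).2 (fun _ => rfl) x
    rw [sub_sub, ← hw_eq hx, key, hu_eq hx]
    exact congrArg _ (predictorFeedback_congr A B K X D (hu_eq.mono (hsub hx)))

/-- The direct and inverse infinite-dimensional backstepping transformations
are mutually inverse (linear case). -/
theorem backstepping_transformations_mutually_inverse
    (n : ℕ) (A : Matrix (Fin n) (Fin n) ℝ) (B K : Fin n → ℝ) (D : ℝ) (hD : 0 < D)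
    (X : Fin n → ℝ) :
    -- direct transformation followed by the inverse transformation
    (∀ uh : ℝ → ℝ, ContinuousOn uh (Icc 0 1) →
      ∀ wh : ℝ → ℝ,
        (∀ x ∈ Icc (0 : ℝ) 1,
          wh x = uh x - K ⬝ᵥ (NormedSpace.exp ((D * x) • A)).mulVec X
            - D * ∫ y in (0 : ℝ)..x,
                (K ⬝ᵥ (NormedSpace.exp ((D * (x - y)) • A)).mulVec B) * uh y) →
        ∀ x ∈ Icc (0 : ℝ) 1,
          uh x = wh x
            + K ⬝ᵥ (NormedSpace.exp ((D * x) • (A + vecMulVec B K))).mulVec X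
            + D * ∫ y in (0 : ℝ)..x,
                (K ⬝ᵥ (NormedSpace.exp
                  ((D * (x - y)) • (A + vecMulVec B K))).mulVec B) * wh y)
    ∧
    -- inverse transformation followed by the direct transformation
    (∀ wh : ℝ → ℝ, ContinuousOn wh (Icc 0 1) →
      ∀ uh : ℝ → ℝ,
        (∀ x ∈ Icc (0 : ℝ) 1,
          uh x = wh x
            + K ⬝ᵥ (NormedSpace.exp ((D * x) • (A + vecMulVec B K))).mulVec X
            + D * ∫ y in (0 : ℝ)..x,
                (K ⬝ᵥ (NormedSpace.exp
                  ((D * (x - y)) • (A + vecMulVec B K))).mulVec B) * wh y) →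
        ∀ x ∈ Icc (0 : ℝ) 1,
          wh x = uh x - K ⬝ᵥ (NormedSpace.exp ((D * x) • A)).mulVec X
            - D * ∫ y in (0 : ℝ)..x,
                (K ⬝ᵥ (NormedSpace.exp ((D * (x - y)) • A)).mulVec B) * uh y) :=
  backstepping_transformations_mutually_inverse_general n A B K D X
end
end

section
/- Target system under the backstepping transformation: suppose X : [t0,infinity) -> R^n is continuously differentiable and satisfies X'(t) = A X(t) + B u(0,t), where u(x,t) = U(phi(t + x (sigma(t) - t))) is the actual actuator state, u_hat(x,t) = U(t + D_hat (x - 1)) is the estimated actuator state, u_tilde(x,t) = u(x,t) - u_hat(x,t) is the observer error, U satisfies the predictor feedback U(t) = K ( e^{A D_hat} X(t) + integral from t - D_hat to t of e^{A(t - theta)} B U(theta) d theta ), and delta satisfies Assumption A and Assumption B. Define w_hat(x,t) = u_hat(x,t) - K e^{A D_hat x} X(t) - D_hat * integral from 0 to x of K e^{A D_hat (x - y)} B u_hat(y,t) dy. Then: (i) X'(t) = (A + B K) X(t) + B w_hat(0,t) + B u_tilde(0,t); (ii) D_hat * w_hat_t(x,t) = w_hat_x(x,t) - D_hat K e^{A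 D_hat x} B u_tilde(0,t) and w_hat(1,t) = 0; (iii) u_tilde_t(x,t) = pi(x,t) u_tilde_x(x,t) - (1 - D_hat pi(x,t)) r(x,t) and u_tilde(1,t) = 0, where pi(x,t) = (1 + x (sigma'(t) - 1)) / (sigma(t) - t) and r(x,t) = (1/D_hat) w_hat_x(x,t) + K e^{(A + B K) D_hat x}(A + B K) X(t) + K B w_hat(x,t) + D_hat K (A + B K) * integral from 0 to x of e^{(A + B K) D_hat (x - y)} B w_hat(y,t) dy; (iv) D_hat * w_hat_{x t}(x,t) = w_hat_{x x}(x,t) - D_hat^2 K e^{A D_hat x} A B u_tilde(0,t) and w_hat_x(1,t) = D_hat K e^{A D_hat} B u_tilde(0,t). -/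
/-!
Substituting `θ = t + D̂ (y - 1)` in the backstepping integral shows that
`ŵ(x,t) = F(s) + g(s) ⬝ q(t)` with `s = t + D̂ (x - 1)`, where all the dependence on the plant
is carried by `q(t) = e^{A (D̂ - t)} X(t) - ∫₀^{t - D̂} e^{-A θ} B U(θ) dθ`.
The operator `D̂ ∂ₜ - ∂ₓ` annihilates functions of `s`, so `D̂ ŵₜ - ŵₓ = D̂ g(s) ⬝ q'(t)`, and
the plant equation gives `q' = ũ(0,t) e^{A (D̂ - t)} B`. Differentiating in `x` preserves the
form `F(s) + g(s) ⬝ q(t)`, which gives (iv); the boundary value of `ŵₓ(1,t)` comes from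
differentiating `ŵ(1,·) ≡ 0`. For (iii), the backstepping transformation is inverted by the
closed-loop variation of constants formula (both sides solve the same linear ODE in `x`), which
identifies `r` with `ûₓ / D̂ = U'(t + D̂ (x - 1))`; the transport equation for `ũ` is then the
chain rule.
-/

open Matrix MeasureTheory intervalIntegral Set
open NormedSpace (exp)

noncomputable section

namespace Backstepping

variable {m : Type*} [Fintype m]

theorem _root_.HasDerivAt.dotProduct {g q : ℝ → m → ℝ} {g' q' : m → ℝ} {t : ℝ}
    (hg : HasDerivAt g g' t) (hq : HasDerivAt q q' t) :
    HasDerivAt (fun s => g s ⬝ᵥ q s) (g' ⬝ᵥ q t + g t ⬝ᵥ q') t := by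
  have h := HasDerivAt.fun_sum (u := Finset.univ)
    fun i _ => (hasDerivAt_pi.1 hg i).mul (hasDerivAt_pi.1 hq i)
  exact h.congr_deriv Finset.sum_add_distrib

theorem hasDerivAt_add_mul_sub_one (t D x : ℝ) : HasDerivAt (fun y => t + D * (y - 1)) D x := by
  simpa using (((hasDerivAt_id x).sub_const 1).const_mul D).const_add t

theorem deriv_eq_zero_of_forall_ge {f : ℝ → ℝ} {t : ℝ} (h : ∀ s, t ≤ s → f s = 0) :
    deriv f t = 0 := by
  by_cases hf : DifferentiableAt ℝ f t
  · rw [← hf.derivWithin (uniqueDiffOn_Ici t t self_mem_Ici),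
      derivWithin_congr (s := Ici t) (f := fun _ => 0) (fun s hs => h s hs) (h t le_rfl)]
    simp
  · exact deriv_zero_of_not_differentiableAt hf

theorem mulVec_intervalIntegral (M : Matrix m m ℝ) {f : ℝ → m → ℝ} {a b : ℝ}
    (hf : IntervalIntegrable f volume a b) :
    M *ᵥ ∫ y in a..b, f y = ∫ y in a..b, M *ᵥ f y :=
  ((mulVecLin M).toContinuousLinearMap.intervalIntegral_comp_comm hf).symm

theorem dotProduct_intervalIntegral (w : m → ℝ) {f : ℝ → m → ℝ} {a b : ℝ}
    (hf : IntervalIntegrable f volume a b) :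
    w ⬝ᵥ ∫ y in a..b, f y = ∫ y in a..b, w ⬝ᵥ f y :=
  ((dotProductBilin ℝ ℝ w).toContinuousLinearMap.intervalIntegral_comp_comm hf).symm

theorem eq_of_hasDerivAt_mulVec_add {M : Matrix m m ℝ} {g Y Z : ℝ → m → ℝ} {x₀ : ℝ}
    (hY : ∀ x, HasDerivAt Y (M *ᵥ Y x + g x) x) (hZ : ∀ x, HasDerivAt Z (M *ᵥ Z x + g x) x)
    (h₀ : Y x₀ = Z x₀) : Y = Z :=
  ODE_solution_unique_univ (v := fun x y => M *ᵥ y + g x) (s := fun _ => univ)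
    (fun x => ((mulVecLin M).toContinuousLinearMap.lipschitz.add
      (LipschitzWith.const (g x))).lipschitzOnWith)
    (fun x => ⟨hY x, trivial⟩) (fun x => ⟨hZ x, trivial⟩) h₀

theorem closedLoop_mulVec_add (A : Matrix m m ℝ) (B K v : m → ℝ) (a c : ℝ) :
    (A + vecMulVec B K) *ᵥ v + (a - K ⬝ᵥ v) • B + (c - a) • B = A *ᵥ v + c • B := by
  rw [add_mulVec, vecMulVec_mulVec, op_smul_eq_smul, add_assoc, add_assoc, ← add_smul, ← add_smul]
  congr 2
  ring

theorem observer_error_transport {V U σ : ℝ → ℝ} {D t x : ℝ} (hV : Differentiable ℝ V)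
    (hU : Differentiable ℝ U) (hσ : DifferentiableAt ℝ σ t) (hne : σ t - t ≠ 0) :
    deriv (fun s => V (s + x * (σ s - s)) - U (s + D * (x - 1))) t
      = (1 + x * (deriv σ t - 1)) / (σ t - t)
          * deriv (fun y => V (t + y * (σ t - t)) - U (t + D * (y - 1))) x
        - (1 - D * ((1 + x * (deriv σ t - 1)) / (σ t - t))) * deriv U (t + D * (x - 1)) := by
  have htime : HasDerivAt (fun s => s + x * (σ s - s)) (1 + x * (deriv σ t - 1)) t :=
    (hasDerivAt_id t).add ((hσ.hasDerivAt.sub (hasDerivAt_id t)).const_mul x)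
  have hspace : HasDerivAt (fun y => t + y * (σ t - t)) (σ t - t) x := by
    simpa using ((hasDerivAt_id x).mul_const (σ t - t)).const_add t
  have hs : HasDerivAt (fun s => s + D * (x - 1)) 1 t := (hasDerivAt_id t).add_const _
  have hdt : HasDerivAt (fun s => V (s + x * (σ s - s)) - U (s + D * (x - 1)))
      (deriv V (t + x * (σ t - t)) * (1 + x * (deriv σ t - 1))
        - deriv U (t + D * (x - 1)) * 1) t :=
    ((hV _).hasDerivAt.comp t htime).fun_sub ((hU _).hasDerivAt.comp t hs)
  have hdx : HasDerivAt (fun y => V (t + y * (σ t - t)) - U (t + D * (y - 1)))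
      (deriv V (t + x * (σ t - t)) * (σ t - t) - deriv U (t + D * (x - 1)) * D) x :=
    ((hV _).hasDerivAt.comp x hspace).fun_sub
      ((hU _).hasDerivAt.comp x (hasDerivAt_add_mul_sub_one t D x))
  rw [hdt.deriv, hdx.deriv]
  field_simp
  ring

section Exponential

variable [DecidableEq m]

theorem exp_smul_add (A : Matrix m m ℝ) (s r : ℝ) :
    exp ((s + r) • A) = exp (s • A) * exp (r • A) := by
  rw [add_smul]
  exact Matrix.exp_add_of_commute _ _ (((Commute.refl A).smul_left s).smul_right r)

theorem exp_smul_mulVec_exp_smul_mulVec (A : Matrix m m ℝ) (s r : ℝ) (v : m → ℝ) :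
    exp (s • A) *ᵥ exp (r • A) *ᵥ v = exp ((s + r) • A) *ᵥ v := by
  rw [mulVec_mulVec, exp_smul_add]

theorem commute_exp_smul (A : Matrix m m ℝ) (s : ℝ) : Commute A (exp (s • A)) :=
  ((Commute.refl A).smul_right s).exp_right

theorem hasDerivAt_exp_smul_mulVec (A : Matrix m m ℝ) {φ : ℝ → ℝ} {φ' : ℝ}
    {v : ℝ → m → ℝ} {v' : m → ℝ} {t : ℝ} (hφ : HasDerivAt φ φ' t) (hv : HasDerivAt v v' t) :
    HasDerivAt (fun s => exp (φ s • A) *ᵥ v s) (exp (φ t • A) *ᵥ (φ' • A *ᵥ v t + v')) t := by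
  -- Any normed algebra structure on matrices will do: `exp` only depends on the topology.
  let _ : NormedRing (Matrix m m ℝ) := Matrix.linftyOpNormedRing
  let _ : NormedAlgebra ℝ (Matrix m m ℝ) := Matrix.linftyOpNormedAlgebra
  let mulVecCLM : Matrix m m ℝ →L[ℝ] (m → ℝ) →L[ℝ] m → ℝ :=
    LinearMap.toContinuousLinearMap
      (LinearMap.toContinuousLinearMap.toLinearMap ∘ₗ mulVecBilin ℝ ℝ)
  have hexp := (hasDerivAt_exp_smul_const A (φ t)).scomp t hφ
  refine (mulVecCLM.hasDerivAt_of_bilinear (fun _ => hexp) (fun _ => hv)).congr_deriv ?_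
  change exp (φ t • A) *ᵥ v' + (φ' • (exp (φ t • A) * A)) *ᵥ v t = _
  rw [smul_mulVec, ← mulVec_mulVec, ← mulVec_smul, mulVec_add, add_comm]

theorem hasDerivAt_vecMul_exp_smul (A : Matrix m m ℝ) (w : m → ℝ) (t : ℝ) :
    HasDerivAt (fun s => w ᵥ* exp (s • A)) ((w ᵥ* A) ᵥ* exp (t • A)) t := by
  let _ : NormedRing (Matrix m m ℝ) := Matrix.linftyOpNormedRing
  let _ : NormedAlgebra ℝ (Matrix m m ℝ) := Matrix.linftyOpNormedAlgebra
  let vecMulCLM : Matrix m m ℝ →L[ℝ] m → ℝ := LinearMap.toContinuousLinearMap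
    { toFun := fun M => w ᵥ* M
      map_add' := fun M N => by simp [vecMul_add]
      map_smul' := fun c M => by simp [vecMul_smul] }
  refine (vecMulCLM.hasFDerivAt.comp_hasDerivAt t (hasDerivAt_exp_smul_const' A t)).congr_deriv ?_
  exact (vecMul_vecMul w A _).symm

theorem deriv_neg_vecMul_exp_smul (A : Matrix m m ℝ) (w : m → ℝ) :
    deriv (fun s : ℝ => -(w ᵥ* exp (s • A))) = fun s => -((w ᵥ* A) ᵥ* exp (s • A)) :=
  funext fun s => (hasDerivAt_vecMul_exp_smul A w s).neg.deriv

theorem differentiable_neg_vecMul_exp_smul (A : Matrix m m ℝ) (w : m → ℝ) :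
    Differentiable ℝ (fun s : ℝ => -(w ᵥ* exp (s • A))) := fun s =>
  (hasDerivAt_vecMul_exp_smul A w s).neg.differentiableAt

theorem continuous_exp_smul_mulVec (A : Matrix m m ℝ) {φ : ℝ → ℝ} (hφ : Continuous φ)
    (v : m → ℝ) : Continuous fun s => exp (φ s • A) *ᵥ v := by
  refine Continuous.comp (g := fun s => exp (s • A) *ᵥ v)
    (continuous_iff_continuousAt.2 fun s => ?_) hφ
  exact (hasDerivAt_exp_smul_mulVec A (hasDerivAt_id s) (hasDerivAt_const s v)).continuousAt

def expPrimitive (A : Matrix m m ℝ) (B : m → ℝ) (U : ℝ → ℝ) (r : ℝ) : m → ℝ :=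
  ∫ θ in (0 : ℝ)..r, U θ • exp ((-θ) • A) *ᵥ B

theorem hasDerivAt_expPrimitive (A : Matrix m m ℝ) (B : m → ℝ) {U : ℝ → ℝ} (hU : Continuous U)
    (r : ℝ) : HasDerivAt (expPrimitive A B U) (U r • exp ((-r) • A) *ᵥ B) r :=
  (hU.smul (continuous_exp_smul_mulVec A continuous_neg B)).integral_hasStrictDerivAt 0 r
    |>.hasDerivAt

theorem intervalIntegral_smul_exp_smul_mulVec (A : Matrix m m ℝ) (B : m → ℝ) {U : ℝ → ℝ}
    (hU : Continuous U) (a b : ℝ) :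
    ∫ θ in a..b, U θ • exp ((b - θ) • A) *ᵥ B
      = exp (b • A) *ᵥ (expPrimitive A B U b - expPrimitive A B U a) := by
  have hint : ∀ a b, IntervalIntegrable (fun θ => U θ • exp ((-θ) • A) *ᵥ B) volume a b :=
    fun _ _ => (hU.smul (continuous_exp_smul_mulVec A continuous_neg B)).intervalIntegrable _ _
  rw [expPrimitive, expPrimitive, integral_interval_sub_left (hint 0 b) (hint 0 a),
    mulVec_intervalIntegral _ (hint a b)]
  congr 1 with θ
  rw [mulVec_smul, exp_smul_mulVec_exp_smul_mulVec, sub_eq_add_neg]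

def duhamel (M : Matrix m m ℝ) (B v : m → ℝ) (f : ℝ → ℝ) (D x : ℝ) : m → ℝ :=
  exp ((D * x) • M) *ᵥ v + D • ∫ y in (0 : ℝ)..x, f y • exp ((D * (x - y)) • M) *ᵥ B

theorem duhamel_zero (M : Matrix m m ℝ) (B v : m → ℝ) (f : ℝ → ℝ) (D : ℝ) :
    duhamel M B v f D 0 = v := by
  simp [duhamel]

theorem duhamel_eq_exp_smul_mulVec (M : Matrix m m ℝ) (B v : m → ℝ) {f : ℝ → ℝ}
    (hf : Continuous f) (D x : ℝ) :
    duhamel M B v f D x = exp (x • D • M) *ᵥ (v + D • expPrimitive (D • M) B f x) := by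
  have hint : IntervalIntegrable (fun y => f y • exp ((-y) • D • M) *ᵥ B) volume 0 x :=
    (hf.smul (continuous_exp_smul_mulVec _ continuous_neg B)).intervalIntegrable _ _
  rw [duhamel, expPrimitive, mulVec_add, mulVec_smul, mulVec_intervalIntegral _ hint]
  congr 1
  · rw [smul_smul, mul_comm]
  · refine congrArg _ (integral_congr fun y _ => ?_)
    rw [mulVec_smul, exp_smul_mulVec_exp_smul_mulVec, ← mul_smul, ← sub_eq_add_neg, mul_comm]

theorem hasDerivAt_duhamel (M : Matrix m m ℝ) (B v : m → ℝ) {f : ℝ → ℝ} (hf : Continuous f)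
    (D x : ℝ) :
    HasDerivAt (duhamel M B v f D) (D • (M *ᵥ duhamel M B v f D x + f x • B)) x := by
  have h := hasDerivAt_exp_smul_mulVec (D • M) (hasDerivAt_id x)
    (((hasDerivAt_expPrimitive (D • M) B hf x).const_smul D).const_add v)
  simp only [funext (duhamel_eq_exp_smul_mulVec M B v hf D)]
  refine h.congr_deriv ?_
  rw [id, one_smul, mulVec_add, mulVec_smul, mulVec_smul, exp_smul_mulVec_exp_smul_mulVec,
    add_neg_cancel, zero_smul, NormedSpace.exp_zero, one_mulVec, mulVec_mulVec,
    ← (commute_exp_smul _ _).eq, ← mulVec_mulVec, smul_mulVec, smul_add]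
  rfl

theorem dotProduct_mulVec_duhamel (M N : Matrix m m ℝ) (B v w : m → ℝ) {f : ℝ → ℝ}
    (hf : Continuous f) (D x : ℝ) :
    w ⬝ᵥ N *ᵥ duhamel M B v f D x
      = w ⬝ᵥ (N * exp ((D * x) • M)) *ᵥ v
        + D * ∫ y in (0 : ℝ)..x, (w ⬝ᵥ (N * exp ((D * (x - y)) • M)) *ᵥ B) * f y := by
  have hcont : Continuous fun y => f y • exp ((D * (x - y)) • M) *ᵥ B :=
    hf.smul (continuous_exp_smul_mulVec M (by fun_prop) B)
  rw [duhamel, mulVec_add, dotProduct_add, mulVec_mulVec, mulVec_smul, dotProduct_smul,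
    mulVec_intervalIntegral _ (hcont.intervalIntegrable _ _),
    dotProduct_intervalIntegral _ ((continuous_const.matrix_mulVec hcont).intervalIntegrable _ _)]
  congr 2
  refine integral_congr fun y _ => ?_
  simp only [mulVec_smul, dotProduct_smul, mulVec_mulVec, smul_eq_mul, mul_comm]

theorem duhamel_feedback (M : Matrix m m ℝ) (B K v : m → ℝ) {f : ℝ → ℝ} (hf : Continuous f)
    (D : ℝ) :
    duhamel (M + vecMulVec B K) B v (fun y => f y - K ⬝ᵥ duhamel M B v f D y) D
      = duhamel M B v f D := by
  have hZ := hasDerivAt_duhamel M B v hf D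
  have hw : Continuous fun y => f y - K ⬝ᵥ duhamel M B v f D y := hf.sub
    (continuous_const.dotProduct (continuous_iff_continuousAt.2 fun x => (hZ x).continuousAt))
  refine eq_of_hasDerivAt_mulVec_add (M := D • (M + vecMulVec B K))
    (g := fun x => D • ((f x - K ⬝ᵥ duhamel M B v f D x) • B)) (x₀ := 0)
    (fun x => ?_) (fun x => ?_) (by rw [duhamel_zero, duhamel_zero])
  · exact (hasDerivAt_duhamel _ B v hw D x).congr_deriv (by rw [smul_mulVec, smul_add])
  · refine (hZ x).congr_deriv ?_
    rw [smul_mulVec, ← smul_add, add_mulVec, vecMulVec_mulVec, op_smul_eq_smul, sub_smul]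
    congr 1
    abel

theorem duhamel_comp_affine (A : Matrix m m ℝ) (B v : m → ℝ) {U : ℝ → ℝ} (hU : Continuous U)
    (D t x : ℝ) :
    duhamel A B v (fun y => U (t + D * (y - 1))) D x
      = exp ((t + D * (x - 1)) • A) *ᵥ (expPrimitive A B U (t + D * (x - 1))
          + (exp ((D - t) • A) *ᵥ v - expPrimitive A B U (t - D))) := by
  set s := t + D * (x - 1)
  have hsubst : ∀ y, U (t + D * (y - 1)) • exp ((D * (x - y)) • A) *ᵥ B
      = (fun θ => U θ • exp ((s - θ) • A) *ᵥ B) (D * y + (t - D)) := fun y => by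
    simp only [s]
    ring_nf
  rw [duhamel]
  simp only [hsubst]
  rw [smul_integral_comp_mul_add (f := fun θ => U θ • exp ((s - θ) • A) *ᵥ B), mul_zero,
    zero_add, show D * x + (t - D) = s by ring, intervalIntegral_smul_exp_smul_mulVec A B hU,
    add_sub_left_comm, mulVec_add, exp_smul_mulVec_exp_smul_mulVec,
    show s + (D - t) = D * x by ring]

end Exponential

def transportForm (D : ℝ) (F : ℝ → ℝ) (g q : ℝ → m → ℝ) (x t : ℝ) : ℝ :=
  F (t + D * (x - 1)) + g (t + D * (x - 1)) ⬝ᵥ q t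

section Transport

variable {D x t F' : ℝ} {F : ℝ → ℝ} {g q : ℝ → m → ℝ} {g' q' : m → ℝ}

theorem hasDerivAt_transportForm_space (hF : HasDerivAt F F' (t + D * (x - 1)))
    (hg : HasDerivAt g g' (t + D * (x - 1))) :
    HasDerivAt (fun y => transportForm D F g q y t) (D * (F' + g' ⬝ᵥ q t)) x := by
  have hs := hasDerivAt_add_mul_sub_one t D x
  refine ((hF.scomp x hs).add ((hg.scomp x hs).dotProduct (hasDerivAt_const x (q t))))
    |>.congr_deriv ?_
  simp only [smul_eq_mul, smul_dotProduct, dotProduct_zero, add_zero]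
  ring

theorem hasDerivAt_transportForm_time (hF : HasDerivAt F F' (t + D * (x - 1)))
    (hg : HasDerivAt g g' (t + D * (x - 1))) (hq : HasDerivAt q q' t) :
    HasDerivAt (fun τ => transportForm D F g q x τ)
      (F' + g' ⬝ᵥ q t + g (t + D * (x - 1)) ⬝ᵥ q') t := by
  have hs : HasDerivAt (fun τ => τ + D * (x - 1)) 1 t := (hasDerivAt_id t).add_const _
  refine ((hF.scomp t hs).add ((hg.scomp t hs).dotProduct hq)).congr_deriv ?_
  simp only [one_smul, add_assoc]

theorem deriv_transportForm_space (hF : Differentiable ℝ F) (hg : Differentiable ℝ g) (t : ℝ) :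
    deriv (fun y => transportForm D F g q y t)
      = fun x => transportForm D (D • deriv F) (D • deriv g) q x t := by
  ext x
  rw [(hasDerivAt_transportForm_space (hF _).hasDerivAt (hg _).hasDerivAt).deriv]
  simp only [transportForm, Pi.smul_apply, smul_eq_mul, smul_dotProduct]
  ring

theorem transportForm_transport (hF : DifferentiableAt ℝ F (t + D * (x - 1)))
    (hg : DifferentiableAt ℝ g (t + D * (x - 1))) (hq : HasDerivAt q q' t) :
    D * deriv (fun τ => transportForm D F g q x τ) t
      = deriv (fun y => transportForm D F g q y t) x + D * (g (t + D * (x - 1)) ⬝ᵥ q') := by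
  rw [(hasDerivAt_transportForm_time hF.hasDerivAt hg.hasDerivAt hq).deriv,
    (hasDerivAt_transportForm_space hF.hasDerivAt hg.hasDerivAt).deriv]
  ring

end Transport

section Profile

variable [DecidableEq m] (A : Matrix m m ℝ) (B K : m → ℝ) (U : ℝ → ℝ) (D : ℝ) (X : ℝ → m → ℝ)

def backsteppingProfile (s : ℝ) : ℝ :=
  U s - K ⬝ᵥ exp (s • A) *ᵥ expPrimitive A B U s

def backsteppingState (τ : ℝ) : m → ℝ :=
  exp ((D - τ) • A) *ᵥ X τ - expPrimitive A B U (τ - D)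

abbrev backsteppingTransform : ℝ → ℝ → ℝ :=
  transportForm D (backsteppingProfile A B K U) (fun s => -(K ᵥ* exp (s • A)))
    (backsteppingState A B U D X)

variable {A B K U D X}

theorem hasDerivAt_dotProduct_exp_smul_mulVec_expPrimitive (w : m → ℝ) (hU : Continuous U)
    (s : ℝ) :
    HasDerivAt (fun s => w ⬝ᵥ exp (s • A) *ᵥ expPrimitive A B U s)
      ((w ᵥ* A) ⬝ᵥ exp (s • A) *ᵥ expPrimitive A B U s + (w ⬝ᵥ B) * U s) s := by
  refine ((hasDerivAt_const s w).dotProduct (hasDerivAt_exp_smul_mulVec A (hasDerivAt_id s)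
    (hasDerivAt_expPrimitive A B hU s))).congr_deriv ?_
  rw [zero_dotProduct, zero_add, id, one_smul, mulVec_add, dotProduct_add, mulVec_smul,
    exp_smul_mulVec_exp_smul_mulVec, add_neg_cancel, zero_smul, NormedSpace.exp_zero, one_mulVec,
    dotProduct_smul, smul_eq_mul, mul_comm (U s), ← dotProduct_mulVec w A, mulVec_mulVec,
    mulVec_mulVec, (commute_exp_smul A s).eq]

theorem deriv_backsteppingProfile (hU : Differentiable ℝ U) :
    deriv (backsteppingProfile A B K U) = fun s => deriv U s
      - ((K ᵥ* A) ⬝ᵥ exp (s • A) *ᵥ expPrimitive A B U s + (K ⬝ᵥ B) * U s) := by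
  ext s
  exact ((hU s).hasDerivAt.sub
    (hasDerivAt_dotProduct_exp_smul_mulVec_expPrimitive K hU.continuous s)).deriv

theorem differentiable_backsteppingProfile (hU : Differentiable ℝ U) :
    Differentiable ℝ (backsteppingProfile A B K U) := fun s =>
  ((hU s).hasDerivAt.sub
    (hasDerivAt_dotProduct_exp_smul_mulVec_expPrimitive K hU.continuous s)).differentiableAt

theorem differentiable_deriv_backsteppingProfile (hU : Differentiable ℝ U)
    (hU' : Differentiable ℝ (deriv U)) :
    Differentiable ℝ (deriv (backsteppingProfile A B K U)) := by
  rw [deriv_backsteppingProfile hU]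
  exact hU'.sub fun s => ((hasDerivAt_dotProduct_exp_smul_mulVec_expPrimitive (K ᵥ* A)
    hU.continuous s).differentiableAt.add ((hU s).const_mul _))

theorem hasDerivAt_backsteppingState (hU : Continuous U) {t c : ℝ}
    (hX : HasDerivAt X (A *ᵥ X t + c • B) t) :
    HasDerivAt (backsteppingState A B U D X) ((c - U (t - D)) • exp ((D - t) • A) *ᵥ B) t := by
  refine ((hasDerivAt_exp_smul_mulVec A ((hasDerivAt_id' t).const_sub D) hX).sub
    ((hasDerivAt_expPrimitive A B hU (t - D)).scomp t ((hasDerivAt_id' t).sub_const D)))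
    |>.congr_deriv ?_
  rw [neg_smul, one_smul, neg_add_cancel_left, one_smul, neg_sub, mulVec_smul, ← sub_smul]

theorem eq_backsteppingTransform (hU : Continuous U) {uh wh : ℝ → ℝ → ℝ}
    (huh : ∀ x t, uh x t = U (t + D * (x - 1)))
    (hwh : ∀ x t, wh x t = uh x t - K ⬝ᵥ exp ((D * x) • A) *ᵥ X t
        - D * ∫ y in (0 : ℝ)..x, (K ⬝ᵥ exp ((D * (x - y)) • A) *ᵥ B) * uh y t) :
    wh = backsteppingTransform A B K U D X := by
  ext x t
  have hf : Continuous fun y => U (t + D * (y - 1)) := hU.comp (by fun_prop)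
  have hduh := dotProduct_mulVec_duhamel A 1 B (X t) K hf D x
  simp only [one_mul, one_mulVec] at hduh
  simp only [hwh, huh]
  rw [sub_sub, ← hduh, duhamel_comp_affine A B (X t) hU D t x]
  simp only [backsteppingTransform, transportForm, backsteppingProfile, backsteppingState,
    mulVec_add, dotProduct_add, neg_dotProduct, ← dotProduct_mulVec]
  ring

theorem backsteppingTransform_one (hU : Continuous U) (t : ℝ) :
    backsteppingTransform A B K U D X 1 t
      = U t - K ⬝ᵥ (exp (D • A) *ᵥ X t + ∫ θ in (t - D)..t, U θ • exp ((t - θ) • A) *ᵥ B) := by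
  simp only [backsteppingTransform, transportForm, backsteppingProfile, backsteppingState,
    sub_self, mul_zero, add_zero, intervalIntegral_smul_exp_smul_mulVec A B hU, neg_dotProduct,
    ← dotProduct_mulVec, mulVec_sub, exp_smul_mulVec_exp_smul_mulVec, add_sub_cancel,
    dotProduct_add, dotProduct_sub]
  ring

theorem backsteppingTransform_transport (hU : Differentiable ℝ U) {t c : ℝ}
    (hX : HasDerivAt X (A *ᵥ X t + c • B) t) (x : ℝ) :
    D * deriv (fun τ => backsteppingTransform A B K U D X x τ) t
      = deriv (fun y => backsteppingTransform A B K U D X y t) x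
        - D * (K ⬝ᵥ exp ((D * x) • A) *ᵥ B) * (c - U (t - D)) := by
  rw [transportForm_transport (differentiable_backsteppingProfile hU _)
    (differentiable_neg_vecMul_exp_smul A K _) (hasDerivAt_backsteppingState hU.continuous hX),
    neg_dotProduct, dotProduct_smul, ← dotProduct_mulVec, exp_smul_mulVec_exp_smul_mulVec,
    show t + D * (x - 1) + (D - t) = D * x by ring, smul_eq_mul]
  ring

theorem backsteppingTransform_transport_deriv (hU : Differentiable ℝ U)
    (hU' : Differentiable ℝ (deriv U)) {t c : ℝ} (hX : HasDerivAt X (A *ᵥ X t + c • B) t)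
    (x : ℝ) :
    D * deriv (fun τ => deriv (fun y => backsteppingTransform A B K U D X y τ) x) t
      = deriv (fun y => deriv (fun z => backsteppingTransform A B K U D X z t) y) x
        - D ^ 2 * (K ⬝ᵥ (exp ((D * x) • A) * A) *ᵥ B) * (c - U (t - D)) := by
  simp only [backsteppingTransform, deriv_neg_vecMul_exp_smul, deriv_transportForm_space
    (differentiable_backsteppingProfile hU) (differentiable_neg_vecMul_exp_smul A K)]
  rw [transportForm_transport ((differentiable_deriv_backsteppingProfile hU hU').const_smul D _)
    ((differentiable_neg_vecMul_exp_smul A (K ᵥ* A)).const_smul D _)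
    (hasDerivAt_backsteppingState hU.continuous hX)]
  rw [Pi.smul_apply, smul_dotProduct, neg_dotProduct, dotProduct_smul, ← dotProduct_mulVec,
    ← dotProduct_mulVec, exp_smul_mulVec_exp_smul_mulVec, mulVec_mulVec,
    show t + D * (x - 1) + (D - t) = D * x by ring, (commute_exp_smul A _).eq, smul_eq_mul,
    smul_eq_mul]
  ring

theorem backstepping_inverse_deriv (A : Matrix m m ℝ) (B K v : m → ℝ) {D : ℝ} (hD : D ≠ 0)
    {f w : ℝ → ℝ} (hf : Continuous f) {f' x : ℝ} (hfx : HasDerivAt f f' x)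
    (hw : ∀ y, w y = f y - K ⬝ᵥ exp ((D * y) • A) *ᵥ v
        - D * ∫ z in (0 : ℝ)..y, (K ⬝ᵥ exp ((D * (y - z)) • A) *ᵥ B) * f z) :
    f' / D = 1 / D * deriv w x
      + K ⬝ᵥ (exp ((D * x) • (A + vecMulVec B K)) * (A + vecMulVec B K)) *ᵥ v
      + (K ⬝ᵥ B) * w x
      + D * ∫ y in (0 : ℝ)..x,
          (K ⬝ᵥ ((A + vecMulVec B K) * exp ((D * (x - y)) • (A + vecMulVec B K))) *ᵥ B) * w y := by
  set Acl := A + vecMulVec B K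
  have hZ := hasDerivAt_duhamel A B v hf D
  have hwZ : w = fun y => f y - K ⬝ᵥ duhamel A B v f D y := by
    ext y
    have hKZ := dotProduct_mulVec_duhamel A 1 B v K hf D y
    simp only [one_mul, one_mulVec] at hKZ
    rw [hw, sub_sub, hKZ]
  have hwc : Continuous w := hwZ ▸ hf.sub
    (continuous_const.dotProduct (continuous_iff_continuousAt.2 fun y => (hZ y).continuousAt))
  have hY : duhamel Acl B v w D = duhamel A B v f D := by
    rw [hwZ]
    exact duhamel_feedback A B K v hf D
  have hwd := hfx.fun_sub ((hasDerivAt_const x K).dotProduct (hasDerivAt_duhamel Acl B v hwc D x))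
  rw [show (fun y => f y - K ⬝ᵥ duhamel Acl B v w D y) = w by rw [hY, hwZ]] at hwd
  rw [hwd.deriv, zero_dotProduct, zero_add, dotProduct_smul, dotProduct_add, dotProduct_smul,
    dotProduct_mulVec_duhamel Acl Acl B v K hwc, (commute_exp_smul Acl _).eq, smul_eq_mul,
    smul_eq_mul]
  field_simp
  ring

theorem deriv_backsteppingTransform_one (hU : Differentiable ℝ U) {t c : ℝ}
    (hX : HasDerivAt X (A *ᵥ X t + c • B) t)
    (h1 : ∀ τ, t ≤ τ → backsteppingTransform A B K U D X 1 τ = 0) :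
    deriv (fun y => backsteppingTransform A B K U D X y t) 1
      = D * (K ⬝ᵥ exp (D • A) *ᵥ B) * (c - U (t - D)) := by
  have h := backsteppingTransform_transport (K := K) (D := D) hU hX 1
  rw [deriv_eq_zero_of_forall_ge h1, mul_one] at h
  linarith

end Profile

end Backstepping

open Backstepping

theorem linear_backstepping_target_system_general
    (n : ℕ) (A : Matrix (Fin n) (Fin n) ℝ) (B K : Fin n → ℝ) (D : ℝ) (hD : 0 < D)
    (t0 : ℝ) (δ σ : ℝ → ℝ) (hδ : ContDiff ℝ 1 δ) (hσdiff : Differentiable ℝ σ)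
    -- σ is the inverse of the delayed time φ(t) = t - D̂ - δ(t)
    (hσ : ∀ t, σ t - D - δ (σ t) = t)
    -- Assumption B
    (hB1 : ∀ t, t0 ≤ t → 0 < D + δ t)
    (U : ℝ → ℝ) (hU : ContDiff ℝ 2 U)
    (X : ℝ → Fin n → ℝ)
    (u uh ut wh : ℝ → ℝ → ℝ)
    -- the actual actuator state u(x,t) = U(φ(t + x (σ(t) - t)))
    (hu : ∀ x t, u x t
      = U ((t + x * (σ t - t)) - D - δ (t + x * (σ t - t))))
    -- the estimated actuator state û(x,t) = U(t + D̂ (x - 1))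
    (huh : ∀ x t, uh x t = U (t + D * (x - 1)))
    -- the observer error ũ = u - û
    (hut : ∀ x t, ut x t = u x t - uh x t)
    -- the plant X'(t) = A X(t) + B u(0,t)
    (hplant : ∀ t, t0 ≤ t → HasDerivAt X (A.mulVec (X t) + u 0 t • B) t)
    -- the predictor feedback
    (hfb : ∀ t, t0 ≤ t →
      U t = K ⬝ᵥ ((NormedSpace.exp (D • A)).mulVec (X t)
        + ∫ θ in (t - D)..t, U θ • (NormedSpace.exp ((t - θ) • A)).mulVec B))
    -- the backstepping transformation
    (hwh : ∀ x t, wh x t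
      = uh x t - K ⬝ᵥ (NormedSpace.exp ((D * x) • A)).mulVec (X t)
        - D * ∫ y in (0 : ℝ)..x,
            (K ⬝ᵥ (NormedSpace.exp ((D * (x - y)) • A)).mulVec B) * uh y t) :
    -- the transport coefficient and the perturbation signal
    ∀ (pi r : ℝ → ℝ → ℝ),
      (∀ x t, pi x t = (1 + x * (deriv σ t - 1)) / (σ t - t)) →
      (∀ x t, r x t
        = (1 / D) * deriv (fun y => wh y t) x
          + K ⬝ᵥ ((NormedSpace.exp ((D * x) • (A + vecMulVec B K)))
              * (A + vecMulVec B K)).mulVec (X t)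
          + (K ⬝ᵥ B) * wh x t
          + D * ∫ y in (0 : ℝ)..x,
              (K ⬝ᵥ (((A + vecMulVec B K)
                * NormedSpace.exp ((D * (x - y)) • (A + vecMulVec B K))).mulVec B))
                * wh y t) →
      ∀ t, t0 ≤ t →
        -- (i) the transformed plant
        (HasDerivAt X ((A + vecMulVec B K).mulVec (X t)
            + wh 0 t • B + ut 0 t • B) t)
        ∧
        -- (ii) the transport PDE for ŵ with boundary condition ŵ(1,t) = 0
        ((∀ x ∈ Icc (0 : ℝ) 1,
          D * deriv (fun s => wh x s) t
            = deriv (fun y => wh y t) x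
              - D * (K ⬝ᵥ (NormedSpace.exp ((D * x) • A)).mulVec B) * ut 0 t)
          ∧ wh 1 t = 0)
        ∧
        -- (iii) the transport PDE for ũ with boundary condition ũ(1,t) = 0
        ((∀ x ∈ Icc (0 : ℝ) 1,
          deriv (fun s => ut x s) t
            = pi x t * deriv (fun y => ut y t) x
              - (1 - D * pi x t) * r x t)
          ∧ ut 1 t = 0)
        ∧
        -- (iv) the transport PDE for ŵ_x with its boundary condition
        ((∀ x ∈ Icc (0 : ℝ) 1,
          D * deriv (fun s => deriv (fun y => wh y s) x) t
            = deriv (fun y => deriv (fun z => wh z t) y) x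
              - D ^ 2 * (K ⬝ᵥ ((NormedSpace.exp ((D * x) • A)) * A).mulVec B)
                  * ut 0 t)
          ∧ deriv (fun y => wh y t) 1
              = D * (K ⬝ᵥ (NormedSpace.exp (D • A)).mulVec B) * ut 0 t) := by
  intro pi r hpi hr t ht
  have hUd : Differentiable ℝ U := hU.differentiable (by norm_num)
  have hX : HasDerivAt X (A *ᵥ X t + u 0 t • B) t := hplant t ht
  have hut0 : ut 0 t = u 0 t - U (t - D) := by
    rw [hut, huh, zero_sub, mul_neg_one, ← sub_eq_add_neg]
  have hwh0 : wh 0 t = uh 0 t - K ⬝ᵥ X t := by simp [hwh]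
  have hσt : σ t - t ≠ 0 := fun h => by
    have hσt := hσ t
    rw [sub_eq_zero.1 h] at hσt
    linarith [hB1 t ht]
  have hr' : ∀ x, r x t = deriv U (t + D * (x - 1)) := fun x => by
    have huh_t : (fun y => uh y t) = fun y => U (t + D * (y - 1)) := funext (huh · t)
    have huhx : HasDerivAt (fun y => uh y t) (D * deriv U (t + D * (x - 1))) x := huh_t ▸
      ((hUd _).hasDerivAt.comp x (hasDerivAt_add_mul_sub_one t D x)).congr_deriv (mul_comm _ _)
    have huhc : Continuous fun y => uh y t := huh_t ▸ hUd.continuous.comp (by fun_prop)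
    rw [hr, ← backstepping_inverse_deriv A B K (X t) hD.ne' huhc huhx fun y => hwh y t]
    field_simp
  obtain rfl := eq_backsteppingTransform hUd.continuous huh hwh
  have hwh1 : ∀ τ, t0 ≤ τ → backsteppingTransform A B K U D X 1 τ = 0 := fun τ hτ => by
    rw [backsteppingTransform_one hUd.continuous, ← hfb τ hτ, sub_self]
  refine ⟨?_, ⟨fun x _ => ?_, hwh1 t ht⟩, ⟨fun x _ => ?_, ?_⟩, ⟨fun x _ => ?_, ?_⟩⟩
  · rw [hwh0, hut, closedLoop_mulVec_add]
    exact hX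
  · rw [hut0]
    exact backsteppingTransform_transport hUd hX x
  · rw [hpi, hr']
    simp only [hut, hu, huh]
    exact observer_error_transport (V := fun z => U (z - D - δ z))
      (hUd.comp ((differentiable_id.sub_const D).sub (hδ.differentiable one_ne_zero))) hUd
      (hσdiff t) hσt
  · rw [hut, hu, huh, show t + 1 * (σ t - t) = σ t by ring, hσ, sub_self, mul_zero, add_zero,
      sub_self]
  · rw [hut0]
    exact backsteppingTransform_transport_deriv hUd hU.differentiable_deriv_two hX x
  · rw [hut0]
    exact deriv_backsteppingTransform_one hUd hX fun τ hτ => hwh1 τ (ht.trans hτ)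

/-- The target system obtained under the linear backstepping transformation
(Lemma 6): the transformed plant, the transport PDEs for the transformed
actuator state `ŵ`, the observer error `ũ`, and for `ŵ_x`. -/
theorem linear_backstepping_target_system
    (n : ℕ) (A : Matrix (Fin n) (Fin n) ℝ) (B K : Fin n → ℝ) (D : ℝ) (hD : 0 < D)
    (t0 : ℝ) (δ σ : ℝ → ℝ) (hδ : ContDiff ℝ 1 δ) (hσdiff : Differentiable ℝ σ)
    -- σ is the inverse of the delayed time φ(t) = t - D̂ - δ(t)
    (hσ : ∀ t, σ t - D - δ (σ t) = t)
    (hσ' : ∀ t, σ (t - D - δ t) = t)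
    -- Assumption A
    (hA1 : ∀ t, t0 ≤ t → deriv δ t < 1)
    (hA2 : 0 < (sSup ((fun θ => 1 - deriv δ θ) '' Ici (σ t0)))⁻¹)
    -- Assumption B
    (hB1 : ∀ t, t0 ≤ t → 0 < D + δ t)
    (hB2 : 0 < (sSup ((fun θ => D + δ θ) '' Ici (σ t0)))⁻¹)
    (U : ℝ → ℝ) (hU : ContDiff ℝ 2 U)
    (X : ℝ → Fin n → ℝ)
    (u uh ut wh : ℝ → ℝ → ℝ)
    -- the actual actuator state u(x,t) = U(φ(t + x (σ(t) - t)))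
    (hu : ∀ x t, u x t
      = U ((t + x * (σ t - t)) - D - δ (t + x * (σ t - t))))
    -- the estimated actuator state û(x,t) = U(t + D̂ (x - 1))
    (huh : ∀ x t, uh x t = U (t + D * (x - 1)))
    -- the observer error ũ = u - û
    (hut : ∀ x t, ut x t = u x t - uh x t)
    -- the plant X'(t) = A X(t) + B u(0,t)
    (hplant : ∀ t, t0 ≤ t → HasDerivAt X (A.mulVec (X t) + u 0 t • B) t)
    -- the predictor feedback
    (hfb : ∀ t, t0 ≤ t →
      U t = K ⬝ᵥ ((NormedSpace.exp (D • A)).mulVec (X t)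
        + ∫ θ in (t - D)..t, U θ • (NormedSpace.exp ((t - θ) • A)).mulVec B))
    -- the backstepping transformation
    (hwh : ∀ x t, wh x t
      = uh x t - K ⬝ᵥ (NormedSpace.exp ((D * x) • A)).mulVec (X t)
        - D * ∫ y in (0 : ℝ)..x,
            (K ⬝ᵥ (NormedSpace.exp ((D * (x - y)) • A)).mulVec B) * uh y t) :
    -- the transport coefficient and the perturbation signal
    ∀ (pi r : ℝ → ℝ → ℝ),
      (∀ x t, pi x t = (1 + x * (deriv σ t - 1)) / (σ t - t)) →
      (∀ x t, r x t
        = (1 / D) * deriv (fun y => wh y t) x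
          + K ⬝ᵥ ((NormedSpace.exp ((D * x) • (A + vecMulVec B K)))
              * (A + vecMulVec B K)).mulVec (X t)
          + (K ⬝ᵥ B) * wh x t
          + D * ∫ y in (0 : ℝ)..x,
              (K ⬝ᵥ (((A + vecMulVec B K)
                * NormedSpace.exp ((D * (x - y)) • (A + vecMulVec B K))).mulVec B))
                * wh y t) →
      ∀ t, t0 ≤ t →
        -- (i) the transformed plant
        (HasDerivAt X ((A + vecMulVec B K).mulVec (X t)
            + wh 0 t • B + ut 0 t • B) t)
        ∧
        -- (ii) the transport PDE for ŵ with boundary condition ŵ(1,t) = 0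
        ((∀ x ∈ Icc (0 : ℝ) 1,
          D * deriv (fun s => wh x s) t
            = deriv (fun y => wh y t) x
              - D * (K ⬝ᵥ (NormedSpace.exp ((D * x) • A)).mulVec B) * ut 0 t)
          ∧ wh 1 t = 0)
        ∧
        -- (iii) the transport PDE for ũ with boundary condition ũ(1,t) = 0
        ((∀ x ∈ Icc (0 : ℝ) 1,
          deriv (fun s => ut x s) t
            = pi x t * deriv (fun y => ut y t) x
              - (1 - D * pi x t) * r x t)
          ∧ ut 1 t = 0)
        ∧
        -- (iv) the transport PDE for ŵ_x with its boundary condition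
        ((∀ x ∈ Icc (0 : ℝ) 1,
          D * deriv (fun s => deriv (fun y => wh y s) x) t
            = deriv (fun y => deriv (fun z => wh z t) y) x
              - D ^ 2 * (K ⬝ᵥ ((NormedSpace.exp ((D * x) • A)) * A).mulVec B)
                  * ut 0 t)
          ∧ deriv (fun y => wh y t) 1
              = D * (K ⬝ᵥ (NormedSpace.exp (D • A)).mulVec B) * ut 0 t) :=
  linear_backstepping_target_system_general n A B K D hD t0 δ σ hδ hσdiff hσ hB1 U hU X u uh ut wh
    hu huh hut hplant hfb hwh
end
end

section
/- L2 bounds for the inverse backstepping transformation: let A be a real n x n matrix, B in R^n, K a 1 x n row vector, and D_hat > 0. There exist positive constants N1 and N2 (depending only on A, B, K, D_hat) such that for every X in R^n and every continuously differentiable w_hat : [0,1] -> R, the function u_hat(x) = w_hat(x) + K e^{(A + B K) D_hat x} X + D_hat * integral from 0 to x of K e^{(A + B K) D_hat (x - y)} B w_hat(y) dy satisfies integral from 0 to 1 of u_hat(x)^2 dx <= N1 * ( |X|^2 + integral from 0 to 1 of w_hat(x)^2 dx ) and integral from 0 to 1 of (u_hat'(x))^2 dx <= N2 * ( |X|^2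 + integral from 0 to 1 of w_hat(x)^2 dx + integral from 0 to 1 of (w_hat'(x))^2 dx ). -/
/-!
With `M = D • (A + B K)`, the factorisation `exp ((x - y) • M) = exp (x • M) * exp (-y • M)`
writes `û x = ŵ x + K ⬝ᵥ exp (x • M) *ᵥ Z x` with `Z x = X + D • ∫₀ˣ ŵ y • exp (-y • M) *ᵥ B`.
Hence `û - ŵ` is bounded on `[0, 1]` by a multiple of `‖X‖ + ∫₀¹ |ŵ|`, and so is
`û' - ŵ' - D (K ⬝ᵥ B) ŵ`, since `Z' x = D • ŵ x • exp (-x • M) *ᵥ B` and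
`exp (x • M) * exp (-x • M) = 1`. Squaring, integrating, and `(∫₀¹ |ŵ|)² ≤ ∫₀¹ ŵ²` give
the bounds.
-/

open Matrix MeasureTheory intervalIntegral Set

noncomputable section

lemma norm_sq_le_sum_sq {ι : Type*} [Fintype ι] (X : ι → ℝ) : ‖X‖ ^ 2 ≤ ∑ i, X i ^ 2 := by
  have hX : ‖X‖ ≤ √(∑ i, X i ^ 2) :=
    (pi_norm_le_iff_of_nonneg (Real.sqrt_nonneg _)).2 fun i => by
      rw [Real.norm_eq_abs, ← Real.sqrt_sq_eq_abs]
      exact Real.sqrt_le_sqrt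
        (Finset.single_le_sum (fun j _ => sq_nonneg (X j)) (Finset.mem_univ i))
  calc ‖X‖ ^ 2 ≤ √(∑ i, X i ^ 2) ^ 2 := pow_le_pow_left₀ (norm_nonneg X) hX 2
    _ = ∑ i, X i ^ 2 := Real.sq_sqrt (Finset.sum_nonneg fun i _ => sq_nonneg (X i))

lemma abs_dotProduct_le_sum_abs_mul_norm {ι : Type*} [Fintype ι] (K v : ι → ℝ) :
    |K ⬝ᵥ v| ≤ (∑ i, |K i|) * ‖v‖ := by
  rw [dotProduct, Finset.sum_mul]
  refine (Finset.abs_sum_le_sum_abs _ _).trans (Finset.sum_le_sum fun i _ => ?_)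
  rw [abs_mul, ← Real.norm_eq_abs (v i)]
  exact mul_le_mul_of_nonneg_left (norm_le_pi_norm v i) (abs_nonneg _)

lemma sq_intervalIntegral_le_intervalIntegral_sq {f : ℝ → ℝ} (hf : Continuous f) :
    (∫ x in (0:ℝ)..1, f x) ^ 2 ≤ ∫ x in (0:ℝ)..1, f x ^ 2 := by
  set m := ∫ x in (0:ℝ)..1, f x
  have hvar : 0 ≤ ∫ x in (0:ℝ)..1, (f x - m) ^ 2 :=
    integral_nonneg zero_le_one fun _ _ => sq_nonneg _
  have hf2 : IntervalIntegrable (fun x => f x ^ 2) volume 0 1 :=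
    (hf.pow 2).intervalIntegrable _ _
  have hfm : IntervalIntegrable (fun x => 2 * f x * m) volume 0 1 :=
    ((continuous_const.mul hf).mul continuous_const).intervalIntegrable _ _
  have hexpand : ∫ x in (0:ℝ)..1, (f x - m) ^ 2 = (∫ x in (0:ℝ)..1, f x ^ 2) - m ^ 2 := by
    simp_rw [sub_sq]
    rw [integral_add (hf2.sub hfm) intervalIntegrable_const, integral_sub hf2 hfm,
      intervalIntegral.integral_mul_const, intervalIntegral.integral_const_mul]
    simp only [intervalIntegral.integral_const, sub_zero, smul_eq_mul]
    ring
  linarith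

lemma integral_sq_le_of_abs_le_add {a b : ℝ} (hab : a ≤ b) {g f₁ f₂ : ℝ → ℝ}
    (hg : Continuous g) (hf₁ : Continuous f₁) (hf₂ : Continuous f₂)
    (h : ∀ x ∈ Icc a b, |g x| ≤ |f₁ x| + |f₂ x|) :
    ∫ x in a..b, g x ^ 2 ≤ 2 * (∫ x in a..b, f₁ x ^ 2) + 2 * ∫ x in a..b, f₂ x ^ 2 := by
  have hpt : ∀ x ∈ Icc a b, g x ^ 2 ≤ 2 * f₁ x ^ 2 + 2 * f₂ x ^ 2 := fun x hx => by
    have := pow_le_pow_left₀ (abs_nonneg _) (h x hx) 2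
    rw [sq_abs] at this
    nlinarith [sq_abs (f₁ x), sq_abs (f₂ x), sq_nonneg (|f₁ x| - |f₂ x|)]
  have hf₁' : IntervalIntegrable (fun x => 2 * f₁ x ^ 2) volume a b :=
    ((hf₁.pow 2).const_mul 2).intervalIntegrable _ _
  have hf₂' : IntervalIntegrable (fun x => 2 * f₂ x ^ 2) volume a b :=
    ((hf₂.pow 2).const_mul 2).intervalIntegrable _ _
  calc ∫ x in a..b, g x ^ 2 ≤ ∫ x in a..b, (2 * f₁ x ^ 2 + 2 * f₂ x ^ 2) :=
        integral_mono_on hab ((hg.pow 2).intervalIntegrable _ _) (hf₁'.add hf₂') hpt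
    _ = 2 * (∫ x in a..b, f₁ x ^ 2) + 2 * ∫ x in a..b, f₂ x ^ 2 := by
        rw [integral_add hf₁' hf₂', intervalIntegral.integral_const_mul,
          intervalIntegral.integral_const_mul]

lemma sq_norm_add_integral_abs_le {ι : Type*} [Fintype ι] (X : ι → ℝ) {w : ℝ → ℝ}
    (hw : Continuous w) :
    (‖X‖ + ∫ y in (0:ℝ)..1, |w y|) ^ 2 ≤ 2 * (∑ i, X i ^ 2 + ∫ y in (0:ℝ)..1, w y ^ 2) := by
  have hw2 := sq_intervalIntegral_le_intervalIntegral_sq hw.abs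
  simp only [sq_abs] at hw2
  nlinarith [norm_sq_le_sum_sq X, sq_nonneg (‖X‖ - ∫ y in (0:ℝ)..1, |w y|)]

-- Any normed-algebra structure on matrices would do; the `ℓ∞` operator norm is the one compatible
-- with the sup norm on vectors (`linfty_opNorm_mulVec`).
attribute [local instance] Matrix.linftyOpNormedAddCommGroup Matrix.linftyOpNormedRing
  Matrix.linftyOpNormedAlgebra

section InverseBackstepping

variable {ι : Type*} [Fintype ι] [DecidableEq ι] (M : Matrix ι ι ℝ) (K B : ι → ℝ) (D : ℝ)

def dotProductMulVecL : Matrix ι ι ℝ →L[ℝ] (ι → ℝ) →L[ℝ] ℝ :=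
  ((mulVecBilin ℝ ℝ).compr₂ (dotProductBilin ℝ ℝ K)).toContinuousBilinearMap

omit [DecidableEq ι] in
lemma dotProductMulVecL_apply (N : Matrix ι ι ℝ) (v : ι → ℝ) :
    dotProductMulVecL K N v = K ⬝ᵥ N *ᵥ v := rfl

def inverseBackstepping (X : ι → ℝ) (w : ℝ → ℝ) (x : ℝ) : ℝ :=
  w x + K ⬝ᵥ NormedSpace.exp (x • M) *ᵥ X
    + D * ∫ y in (0:ℝ)..x, (K ⬝ᵥ NormedSpace.exp ((x - y) • M) *ᵥ B) * w y

def backsteppingState (X : ι → ℝ) (w : ℝ → ℝ) (x : ℝ) : ι → ℝ :=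
  X + D • ∫ y in (0:ℝ)..x, w y • NormedSpace.exp ((-y) • M) *ᵥ B

lemma continuous_exp_smul : Continuous fun t : ℝ => NormedSpace.exp (t • M) :=
  NormedSpace.exp_continuous.comp (continuous_id.smul continuous_const)

lemma exp_smul_mul_exp_smul (s t : ℝ) :
    NormedSpace.exp (s • M) * NormedSpace.exp (t • M) = NormedSpace.exp ((s + t) • M) := by
  rw [add_smul, Matrix.exp_add_of_commute _ _ ((Commute.refl M).smul_left s |>.smul_right t)]

lemma inverseBackstepping_eq {w : ℝ → ℝ} (hw : Continuous w) (X : ι → ℝ) (x : ℝ) :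
    inverseBackstepping M K B D X w x
      = w x + K ⬝ᵥ NormedSpace.exp (x • M) *ᵥ backsteppingState M B D X w x := by
  have hkernel : ∀ y, (K ⬝ᵥ NormedSpace.exp ((x - y) • M) *ᵥ B) * w y
      = dotProductMulVecL K (NormedSpace.exp (x • M))
          (w y • NormedSpace.exp ((-y) • M) *ᵥ B) := by
    intro y
    rw [dotProductMulVecL_apply, mulVec_smul, dotProduct_smul, mulVec_mulVec,
      exp_smul_mul_exp_smul, ← sub_eq_add_neg, smul_eq_mul, mul_comm]
  have hint :
      IntervalIntegrable (fun y => w y • NormedSpace.exp ((-y) • M) *ᵥ B) volume 0 x :=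
    Continuous.intervalIntegrable (hw.smul
      (((continuous_exp_smul M).comp continuous_neg).matrix_mulVec continuous_const)) _ _
  rw [inverseBackstepping, backsteppingState, integral_congr fun y _ => hkernel y,
    ContinuousLinearMap.intervalIntegral_comp_comm _ hint, dotProductMulVecL_apply,
    mulVec_add, mulVec_smul, dotProduct_add, dotProduct_smul, smul_eq_mul, add_assoc]

lemma hasDerivAt_backsteppingState {w : ℝ → ℝ} (hw : Continuous w) (X : ι → ℝ) (x : ℝ) :
    HasDerivAt (backsteppingState M B D X w) (D • w x • NormedSpace.exp ((-x) • M) *ᵥ B) x :=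
  (((hw.smul (((continuous_exp_smul M).comp continuous_neg).matrix_mulVec
    continuous_const)).integral_hasStrictDerivAt 0 x).hasDerivAt.const_smul D).const_add X

lemma hasDerivAt_inverseBackstepping {w : ℝ → ℝ} (hw : Continuous w) (X : ι → ℝ) {x : ℝ}
    (hwx : DifferentiableAt ℝ w x) :
    HasDerivAt (inverseBackstepping M K B D X w)
      (deriv w x + K ⬝ᵥ (NormedSpace.exp (x • M) * M) *ᵥ backsteppingState M B D X w x
        + D * (K ⬝ᵥ B) * w x) x := by
  have hβ := (dotProductMulVecL K).hasDerivAt_of_bilinear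
    (fun _ => hasDerivAt_exp_smul_const M x)
    (fun _ => hasDerivAt_backsteppingState M B D hw X x)
  have hboundary :
      K ⬝ᵥ NormedSpace.exp (x • M) *ᵥ (D • w x • NormedSpace.exp ((-x) • M) *ᵥ B)
        = D * (K ⬝ᵥ B) * w x := by
    rw [mulVec_smul, mulVec_smul, mulVec_mulVec, exp_smul_mul_exp_smul,
      add_neg_cancel, zero_smul, NormedSpace.exp_zero, one_mulVec, dotProduct_smul,
      dotProduct_smul, smul_eq_mul, smul_eq_mul]
    ring
  rw [funext (inverseBackstepping_eq M K B D hw X)]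
  refine (hwx.hasDerivAt.add hβ).congr_deriv ?_
  change deriv w x
    + (K ⬝ᵥ NormedSpace.exp (x • M) *ᵥ (D • w x • NormedSpace.exp ((-x) • M) *ᵥ B)
    + K ⬝ᵥ (NormedSpace.exp (x • M) * M) *ᵥ backsteppingState M B D X w x) = _
  rw [hboundary]
  ring

lemma contDiff_inverseBackstepping {w : ℝ → ℝ} (hw : ContDiff ℝ 1 w) (X : ι → ℝ) :
    ContDiff ℝ 1 (inverseBackstepping M K B D X w) := by
  have hderiv x := hasDerivAt_inverseBackstepping M K B D hw.continuous X
    (hw.differentiable one_ne_zero x)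
  have hstate : Continuous (backsteppingState M B D X w) := continuous_iff_continuousAt.2
    fun x => (hasDerivAt_backsteppingState M B D hw.continuous X x).continuousAt
  refine contDiff_one_iff_deriv.2 ⟨fun x => (hderiv x).differentiableAt, ?_⟩
  rw [funext fun x => (hderiv x).deriv]
  exact ((hw.continuous_deriv le_rfl).add (continuous_const.dotProduct
    (((continuous_exp_smul M).mul continuous_const).matrix_mulVec hstate))).add
    (continuous_const.mul hw.continuous)

lemma exists_norm_backsteppingState_le :
    ∃ C, ∀ (X : ι → ℝ) (w : ℝ → ℝ), Continuous w → ∀ x ∈ Icc (0:ℝ) 1,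
      ‖backsteppingState M B D X w x‖ ≤ C * (‖X‖ + ∫ y in (0:ℝ)..1, |w y|) := by
  have hcont : Continuous fun y : ℝ => NormedSpace.exp ((-y) • M) *ᵥ B :=
    ((continuous_exp_smul M).comp continuous_neg).matrix_mulVec continuous_const
  obtain ⟨c, hc⟩ :=
    (isCompact_Icc (a := (0:ℝ)) (b := 1)).exists_bound_of_continuousOn hcont.continuousOn
  refine ⟨1 + |D| * |c|, fun X w hw x hx => ?_⟩
  set m := ∫ y in (0:ℝ)..1, |w y|
  have hm : 0 ≤ m := integral_nonneg zero_le_one fun y _ => abs_nonneg (w y)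
  have hint : ‖∫ y in (0:ℝ)..x, w y • NormedSpace.exp ((-y) • M) *ᵥ B‖ ≤ |c| * m :=
    calc ‖∫ y in (0:ℝ)..x, w y • NormedSpace.exp ((-y) • M) *ᵥ B‖
        ≤ ∫ y in (0:ℝ)..x, ‖w y • NormedSpace.exp ((-y) • M) *ᵥ B‖ :=
          norm_integral_le_integral_norm hx.1
      _ ≤ ∫ y in (0:ℝ)..x, |c| * |w y| := by
          refine integral_mono_on hx.1 ((hw.smul hcont).norm.intervalIntegrable _ _)
            ((continuous_const.mul hw.abs).intervalIntegrable _ _) fun y hy => ?_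
          rw [norm_smul, Real.norm_eq_abs, mul_comm]
          exact mul_le_mul_of_nonneg_right
            ((hc y ⟨hy.1, hy.2.trans hx.2⟩).trans (le_abs_self c)) (abs_nonneg _)
      _ ≤ ∫ y in (0:ℝ)..1, |c| * |w y| :=
          integral_mono_interval le_rfl hx.1 hx.2
            (Filter.Eventually.of_forall fun y => by positivity)
            ((continuous_const.mul hw.abs).intervalIntegrable _ _)
      _ = |c| * m := intervalIntegral.integral_const_mul _ _
  calc ‖backsteppingState M B D X w x‖
      ≤ ‖X‖ + |D| * ‖∫ y in (0:ℝ)..x, w y • NormedSpace.exp ((-y) • M) *ᵥ B‖ := by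
        rw [backsteppingState, ← Real.norm_eq_abs, ← norm_smul]
        exact norm_add_le _ _
    _ ≤ ‖X‖ + |D| * (|c| * m) := by gcongr
    _ ≤ (1 + |D| * |c|) * (‖X‖ + m) := by
        nlinarith [norm_nonneg X,
          mul_nonneg (mul_nonneg (abs_nonneg D) (abs_nonneg c)) (norm_nonneg X)]

lemma exists_abs_dotProduct_mulVec_backsteppingState_le {N : ℝ → Matrix ι ι ℝ}
    (hN : Continuous N) :
    ∃ C, ∀ (X : ι → ℝ) (w : ℝ → ℝ), Continuous w → ∀ x ∈ Icc (0:ℝ) 1,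
      |K ⬝ᵥ N x *ᵥ backsteppingState M B D X w x| ≤ C * (‖X‖ + ∫ y in (0:ℝ)..1, |w y|) := by
  obtain ⟨cN, hcN⟩ :=
    (isCompact_Icc (a := (0:ℝ)) (b := 1)).exists_bound_of_continuousOn hN.continuousOn
  obtain ⟨cZ, hcZ⟩ := exists_norm_backsteppingState_le M B D
  refine ⟨(∑ i, |K i|) * |cN| * cZ, fun X w hw x hx => ?_⟩
  calc |K ⬝ᵥ N x *ᵥ backsteppingState M B D X w x|
      ≤ (∑ i, |K i|) * ‖N x *ᵥ backsteppingState M B D X w x‖ :=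
        abs_dotProduct_le_sum_abs_mul_norm _ _
    _ ≤ (∑ i, |K i|) * (|cN| * (cZ * (‖X‖ + ∫ y in (0:ℝ)..1, |w y|))) := by
        grw [linfty_opNorm_mulVec, (hcN x hx).trans (le_abs_self cN), hcZ X w hw x hx]
    _ = _ := by ring

lemma exists_abs_inverseBackstepping_sub_le :
    ∃ C, ∀ (X : ι → ℝ) (w : ℝ → ℝ), Continuous w → ∀ x ∈ Icc (0:ℝ) 1,
      |inverseBackstepping M K B D X w x - w x| ≤ C * (‖X‖ + ∫ y in (0:ℝ)..1, |w y|) := by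
  obtain ⟨C, hC⟩ :=
    exists_abs_dotProduct_mulVec_backsteppingState_le M K B D (continuous_exp_smul M)
  refine ⟨C, fun X w hw x hx => ?_⟩
  rw [inverseBackstepping_eq M K B D hw, add_sub_cancel_left]
  exact hC X w hw x hx

lemma exists_abs_deriv_inverseBackstepping_sub_le :
    ∃ C, ∀ (X : ι → ℝ) (w : ℝ → ℝ), ContDiff ℝ 1 w → ∀ x ∈ Icc (0:ℝ) 1,
      |deriv (inverseBackstepping M K B D X w) x - deriv w x - D * (K ⬝ᵥ B) * w x|
        ≤ C * (‖X‖ + ∫ y in (0:ℝ)..1, |w y|) := by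
  obtain ⟨C, hC⟩ := exists_abs_dotProduct_mulVec_backsteppingState_le M K B D
    (N := fun t => NormedSpace.exp (t • M) * M) ((continuous_exp_smul M).mul continuous_const)
  refine ⟨C, fun X w hw x hx => ?_⟩
  rw [(hasDerivAt_inverseBackstepping M K B D hw.continuous X
    (hw.differentiable one_ne_zero x)).deriv]
  convert hC X w hw.continuous x hx using 2
  ring

lemma exists_integral_sq_inverseBackstepping_le :
    ∃ N > 0, ∀ (X : ι → ℝ) (w : ℝ → ℝ), ContDiff ℝ 1 w →
      ∫ x in (0:ℝ)..1, inverseBackstepping M K B D X w x ^ 2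
        ≤ N * (∑ i, X i ^ 2 + ∫ x in (0:ℝ)..1, w x ^ 2) := by
  obtain ⟨C, hC⟩ := exists_abs_inverseBackstepping_sub_le M K B D
  refine ⟨2 + 4 * C ^ 2, by positivity, fun X w hw => ?_⟩
  set r := ‖X‖ + ∫ y in (0:ℝ)..1, |w y|
  have hpt x (hx : x ∈ Icc (0:ℝ) 1) :
      |inverseBackstepping M K B D X w x| ≤ |w x| + |C * r| := by
    linarith [hC X w hw.continuous x hx, le_abs_self (C * r),
      abs_sub_abs_le_abs_sub (inverseBackstepping M K B D X w x) (w x)]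
  have hint := integral_sq_le_of_abs_le_add zero_le_one
    (contDiff_inverseBackstepping M K B D hw X).continuous hw.continuous continuous_const hpt
  simp only [intervalIntegral.integral_const, sub_zero, smul_eq_mul, one_mul] at hint
  have hS : 0 ≤ ∑ i, X i ^ 2 := Finset.sum_nonneg fun i _ => sq_nonneg (X i)
  have hW : 0 ≤ ∫ x in (0:ℝ)..1, w x ^ 2 := integral_nonneg zero_le_one fun y _ => sq_nonneg _
  nlinarith [mul_le_mul_of_nonneg_left (sq_norm_add_integral_abs_le X hw.continuous)
    (sq_nonneg C)]

lemma exists_integral_sq_deriv_inverseBackstepping_le :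
    ∃ N > 0, ∀ (X : ι → ℝ) (w : ℝ → ℝ), ContDiff ℝ 1 w →
      ∫ x in (0:ℝ)..1, deriv (inverseBackstepping M K B D X w) x ^ 2
        ≤ N * (∑ i, X i ^ 2 + (∫ x in (0:ℝ)..1, w x ^ 2)
          + ∫ x in (0:ℝ)..1, deriv w x ^ 2) := by
  obtain ⟨C, hC⟩ := exists_abs_deriv_inverseBackstepping_sub_le M K B D
  set δ := D * (K ⬝ᵥ B)
  refine ⟨2 + 4 * δ ^ 2 + 8 * C ^ 2, by positivity, fun X w hw => ?_⟩
  set r := ‖X‖ + ∫ y in (0:ℝ)..1, |w y|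
  have hpt x (hx : x ∈ Icc (0:ℝ) 1) :
      |deriv (inverseBackstepping M K B D X w) x| ≤ |deriv w x| + |(|δ * w x| + C * r)| := by
    set u' := deriv (inverseBackstepping M K B D X w) x
    have hsplit : u' = deriv w x + δ * w x + (u' - deriv w x - δ * w x) := by ring
    have := abs_add_three (deriv w x) (δ * w x) (u' - deriv w x - δ * w x)
    rw [← hsplit] at this
    linarith [hC X w hw x hx, le_abs_self (|δ * w x| + C * r)]
  have hδ := integral_sq_le_of_abs_le_add zero_le_one (g := fun x => |δ * w x| + C * r)
    (f₁ := fun x => δ * w x) (f₂ := fun _ => C * r)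
    ((continuous_const.mul hw.continuous).abs.add continuous_const)
    (continuous_const.mul hw.continuous) continuous_const
    fun x _ => by simpa only [abs_abs] using abs_add_le |δ * w x| (C * r)
  have hint := integral_sq_le_of_abs_le_add zero_le_one (f₂ := fun x => |δ * w x| + C * r)
    ((contDiff_inverseBackstepping M K B D hw X).continuous_deriv le_rfl)
    (hw.continuous_deriv le_rfl) ((continuous_const.mul hw.continuous).abs.add continuous_const) hpt
  simp only [intervalIntegral.integral_const, sub_zero, smul_eq_mul, one_mul, mul_pow,
    intervalIntegral.integral_const_mul] at hδ
  have hS : 0 ≤ ∑ i, X i ^ 2 := Finset.sum_nonneg fun i _ => sq_nonneg (X i)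
  have hW : 0 ≤ ∫ x in (0:ℝ)..1, w x ^ 2 := integral_nonneg zero_le_one fun y _ => sq_nonneg _
  have hW' : 0 ≤ ∫ x in (0:ℝ)..1, deriv w x ^ 2 :=
    integral_nonneg zero_le_one fun y _ => sq_nonneg _
  nlinarith [mul_le_mul_of_nonneg_left (sq_norm_add_integral_abs_le X hw.continuous) (sq_nonneg C),
    mul_nonneg (sq_nonneg δ) hW]

end InverseBackstepping

theorem inverse_backstepping_L2_bounds_general
    (n : ℕ) (A : Matrix (Fin n) (Fin n) ℝ) (B K : Fin n → ℝ) (D : ℝ) :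
    ∃ N1 N2 : ℝ, 0 < N1 ∧ 0 < N2 ∧
      ∀ (X : Fin n → ℝ) (wh : ℝ → ℝ), ContDiff ℝ 1 wh →
        ∀ uh : ℝ → ℝ,
          (∀ x, uh x = wh x
            + K ⬝ᵥ (NormedSpace.exp ((D * x) • (A + vecMulVec B K))).mulVec X
            + D * ∫ y in (0 : ℝ)..x,
                (K ⬝ᵥ (NormedSpace.exp
                  ((D * (x - y)) • (A + vecMulVec B K))).mulVec B) * wh y) →
          (∫ x in (0 : ℝ)..1, (uh x) ^ 2)
              ≤ N1 * ((∑ i, (X i) ^ 2) + ∫ x in (0 : ℝ)..1, (wh x) ^ 2)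
          ∧ (∫ x in (0 : ℝ)..1, (deriv uh x) ^ 2)
              ≤ N2 * ((∑ i, (X i) ^ 2) + (∫ x in (0 : ℝ)..1, (wh x) ^ 2)
                  + ∫ x in (0 : ℝ)..1, (deriv wh x) ^ 2) := by
  set M := D • (A + vecMulVec B K)
  obtain ⟨N1, hN1, h1⟩ := exists_integral_sq_inverseBackstepping_le M K B D
  obtain ⟨N2, hN2, h2⟩ := exists_integral_sq_deriv_inverseBackstepping_le M K B D
  refine ⟨N1, N2, hN1, hN2, fun X wh hwh uh huh => ?_⟩
  obtain rfl : uh = inverseBackstepping M K B D X wh := by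
    funext x
    simp only [huh x, inverseBackstepping, M, smul_smul, mul_comm]
  exact ⟨h1 X wh hwh, h2 X wh hwh⟩

/-- L² bounds for the inverse backstepping transformation (Lemma 11). -/
theorem inverse_backstepping_L2_bounds
    (n : ℕ) (A : Matrix (Fin n) (Fin n) ℝ) (B K : Fin n → ℝ) (D : ℝ) (hD : 0 < D) :
    ∃ N1 N2 : ℝ, 0 < N1 ∧ 0 < N2 ∧
      ∀ (X : Fin n → ℝ) (wh : ℝ → ℝ), ContDiff ℝ 1 wh →
        ∀ uh : ℝ → ℝ,
          (∀ x, uh x = wh x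
            + K ⬝ᵥ (NormedSpace.exp ((D * x) • (A + vecMulVec B K))).mulVec X
            + D * ∫ y in (0 : ℝ)..x,
                (K ⬝ᵥ (NormedSpace.exp
                  ((D * (x - y)) • (A + vecMulVec B K))).mulVec B) * wh y) →
          (∫ x in (0 : ℝ)..1, (uh x) ^ 2)
              ≤ N1 * ((∑ i, (X i) ^ 2) + ∫ x in (0 : ℝ)..1, (wh x) ^ 2)
          ∧ (∫ x in (0 : ℝ)..1, (deriv uh x) ^ 2)
              ≤ N2 * ((∑ i, (X i) ^ 2) + (∫ x in (0 : ℝ)..1, (wh x) ^ 2)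
                  + ∫ x in (0 : ℝ)..1, (deriv wh x) ^ 2) :=
  inverse_backstepping_L2_bounds_general n A B K D
end
end

section
/- Transport equation satisfied by the nonlinear predictor (scalar state case): let D_hat > 0 and let f : R x R -> R be continuously differentiable. Suppose u_hat : [0,1] x [t0, infinity) -> R is continuously differentiable and satisfies D_hat * u_hat_t(x,t) = u_hat_x(x,t); X : [t0, infinity) -> R is continuously differentiable and satisfies X'(t) = f( X(t), u_hat(0,t) + u_tilde0(t) ) for a continuous function u_tilde0; and p_hat : [0,1] x [t0, infinity) -> R is continuously differentiable and satisfies p_hat(x,t) = X(t) + D_hat * integral from 0 to x of f( p_hat(y,t), u_hat(y,t) ) dy. Then for all x in [0,1] and t >= t0, D_hat * p_hat_t(x,t) = p_hat_x(x,t) + D_hat * exp( D_hat * integral from 0 to x of (partial of f with respect to its first argument)( p_hat(y,t), u_hat(y,t) ) dy ) * ( f( X(t), u_hat(0,t) + u_tilde0(t) ) - f( X(t), u_hat(0,t) ) ). -/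
open MeasureTheory intervalIntegral Set

noncomputable section

/-!
Fix `t` and write `H(y, s) = f(p̂(y, s), û(y, s))`. Differentiating the predictor equation gives
`p̂_x = D̂ H` and, under the integral sign, `p̂_t = X'(t) + D̂ ∫₀ˣ H_t`; together with
`H(x) = H(0) + ∫₀ˣ H_x` this shows that `g = D̂ p̂_t - p̂_x` satisfies
`g(x) = D̂ (X'(t) - H(0, t)) + D̂ ∫₀ˣ (D̂ H_t - H_x)`. By the chain rule the operator `D̂ ∂ₜ - ∂ₓ`
maps `H` to `f_ρ · (D̂ ∂ₜ - ∂ₓ) p̂ + f_u · (D̂ ∂ₜ - ∂ₓ) û`, and the second term vanishes because `û`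
solves the transport equation. So `g` solves the linear Volterra equation
`g(x) = D̂ c + ∫₀ˣ D̂ f_ρ g` with `c = f(X, û(0) + ũ₀) - f(X, û(0))`, whose solution is
`D̂ c exp (D̂ ∫₀ˣ f_ρ)`.
-/

open Function

section PartialDerivatives

variable {F : ℝ → ℝ → ℝ}

theorem hasDerivAt_uncurry_left {x t : ℝ} (hF : DifferentiableAt ℝ (uncurry F) (x, t)) :
    HasDerivAt (fun y => F y t) (fderiv ℝ (uncurry F) (x, t) (1, 0)) x :=
  (hF.hasFDerivAt.comp_hasDerivAt x ((hasDerivAt_id' x).prodMk (hasDerivAt_const x t)) :)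

theorem hasDerivAt_uncurry_right {x t : ℝ} (hF : DifferentiableAt ℝ (uncurry F) (x, t)) :
    HasDerivAt (fun s => F x s) (fderiv ℝ (uncurry F) (x, t) (0, 1)) t :=
  (hF.hasFDerivAt.comp_hasDerivAt t ((hasDerivAt_const t x).prodMk (hasDerivAt_id' t)) :)

theorem hasDerivAt_uncurry_comp {g₁ g₂ : ℝ → ℝ} {d₁ d₂ s : ℝ}
    (hF : DifferentiableAt ℝ (uncurry F) (g₁ s, g₂ s))
    (h₁ : HasDerivAt g₁ d₁ s) (h₂ : HasDerivAt g₂ d₂ s) :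
    HasDerivAt (fun s => F (g₁ s) (g₂ s))
      (d₁ * deriv (fun z => F z (g₂ s)) (g₁ s) + d₂ * deriv (fun z => F (g₁ s) z) (g₂ s)) s := by
  rw [(hasDerivAt_uncurry_left hF).deriv, (hasDerivAt_uncurry_right hF).deriv]
  have h := hF.hasFDerivAt.comp_hasDerivAt s (h₁.prodMk h₂)
  have hsplit : ((d₁, d₂) : ℝ × ℝ) = d₁ • ((1 : ℝ), (0 : ℝ)) + d₂ • ((0 : ℝ), (1 : ℝ)) := by
    simp
  rwa [hsplit, map_add, map_smul, map_smul, smul_eq_mul, smul_eq_mul] at h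

theorem ContDiff.continuous_deriv_left (hF : ContDiff ℝ 1 (uncurry F)) :
    Continuous fun p : ℝ × ℝ => deriv (fun y => F y p.2) p.1 := by
  have hdiff := hF.differentiable one_ne_zero
  simp_rw [fun p : ℝ × ℝ => (hasDerivAt_uncurry_left (hdiff p)).deriv]
  exact (ContinuousLinearMap.apply ℝ ℝ _).continuous.comp (hF.continuous_fderiv one_ne_zero)

theorem ContDiff.continuous_deriv_right (hF : ContDiff ℝ 1 (uncurry F)) :
    Continuous fun p : ℝ × ℝ => deriv (fun s => F p.1 s) p.2 := by
  have hdiff := hF.differentiable one_ne_zero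
  simp_rw [fun p : ℝ × ℝ => (hasDerivAt_uncurry_right (hdiff p)).deriv]
  exact (ContinuousLinearMap.apply ℝ ℝ _).continuous.comp (hF.continuous_fderiv one_ne_zero)

theorem ContDiff.hasDerivAt_intervalIntegral (hF : ContDiff ℝ 1 (uncurry F)) (a b t : ℝ) :
    HasDerivAt (fun s => ∫ y in a..b, F y s) (∫ y in a..b, deriv (fun s => F y s) t) t := by
  have hdiff := hF.differentiable one_ne_zero
  have hslice (s : ℝ) : Continuous fun y => F y s :=
    hF.continuous.comp (continuous_id.prodMk continuous_const)
  have hslice' : Continuous fun y => deriv (fun s => F y s) t :=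
    hF.continuous_deriv_right.comp (continuous_id.prodMk continuous_const)
  obtain ⟨M, hM⟩ := ((isCompact_closedBall t 1).prod isCompact_uIcc).exists_bound_of_continuousOn
    (hF.continuous_deriv_right.comp continuous_swap).continuousOn
  exact (intervalIntegral.hasDerivAt_integral_of_dominated_loc_of_deriv_le (bound := fun _ => M)
    (Metric.closedBall_mem_nhds t one_pos)
    (.of_forall fun s => (hslice s).aestronglyMeasurable) ((hslice t).intervalIntegrable _ _)
    hslice'.aestronglyMeasurable
    (.of_forall fun y hy s hs => hM (s, y) ⟨hs, uIoc_subset_uIcc hy⟩)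
    intervalIntegrable_const
    (.of_forall fun y _ s _ =>
      (hasDerivAt_uncurry_right (hdiff (y, s))).differentiableAt.hasDerivAt)).2

end PartialDerivatives

theorem deriv_eq_of_hasDerivAt_of_eqOn {φ ψ : ℝ → ℝ} {s : Set ℝ} {x ψ' : ℝ}
    (hφ : DifferentiableAt ℝ φ x) (hψ : HasDerivAt ψ ψ' x) (heq : EqOn φ ψ s) (hx : x ∈ s)
    (hs : UniqueDiffWithinAt ℝ s x) : deriv φ x = ψ' :=
  (hφ.hasDerivAt.hasDerivWithinAt.derivWithin hs).symm.trans
    ((hψ.hasDerivWithinAt.congr heq (heq hx)).derivWithin hs)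

theorem eq_mul_exp_integral_of_eq_add_integral {k g : ℝ → ℝ} {a b c : ℝ}
    (hk : Continuous k) (hg : Continuous g)
    (heq : ∀ u ∈ Icc a b, g u = c + ∫ y in a..u, k y * g y) :
    ∀ u ∈ Icc a b, g u = c * Real.exp (∫ y in a..u, k y) := by
  set G := fun u => c + ∫ y in a..u, k y * g y
  set E := fun u => Real.exp (-∫ y in a..u, k y)
  have hG (u : ℝ) : HasDerivAt G (k u * g u) u :=
    ((hk.mul hg).integral_hasStrictDerivAt a u).hasDerivAt.const_add c
  have hE (u : ℝ) : HasDerivAt E (E u * -k u) u :=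
    (hk.integral_hasStrictDerivAt a u).hasDerivAt.neg.exp
  have hGE : ∀ u ∈ Icc a b, G u * E u = G a * E a :=
    constant_of_has_deriv_right_zero
      (continuous_iff_continuousAt.2 fun u => ((hG u).mul (hE u)).continuousAt).continuousOn
      fun u hu => by
        have h := (hG u).mul (hE u)
        rw [heq u (Ico_subset_Icc_self hu), show k u * G u * E u + G u * (E u * -k u) = 0 by ring]
          at h
        exact h.hasDerivWithinAt
  intro u hu
  have h := hGE u hu
  simp only [G, E, integral_same, Real.exp_zero, add_zero, inv_one, mul_one, Real.exp_neg] at h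
  rw [heq u hu]
  exact (mul_inv_eq_iff_eq_mul₀ (Real.exp_pos _).ne').1 h

def transportResidual (D : ℝ) (F : ℝ → ℝ → ℝ) (x t : ℝ) : ℝ :=
  D * deriv (fun s => F x s) t - deriv (fun y => F y t) x

theorem transportResidual_comp {f p u : ℝ → ℝ → ℝ} {D x t : ℝ}
    (hf : DifferentiableAt ℝ (uncurry f) (p x t, u x t))
    (hp : DifferentiableAt ℝ (uncurry p) (x, t)) (hu : DifferentiableAt ℝ (uncurry u) (x, t)) :
    transportResidual D (fun y s => f (p y s) (u y s)) x t
      = deriv (fun z => f z (u x t)) (p x t) * transportResidual D p x t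
        + deriv (fun z => f (p x t) z) (u x t) * transportResidual D u x t := by
  have hpt := (hasDerivAt_uncurry_right hp).differentiableAt.hasDerivAt
  have hpx := (hasDerivAt_uncurry_left hp).differentiableAt.hasDerivAt
  have hut := (hasDerivAt_uncurry_right hu).differentiableAt.hasDerivAt
  have hux := (hasDerivAt_uncurry_left hu).differentiableAt.hasDerivAt
  simp only [transportResidual, (hasDerivAt_uncurry_comp hf hpt hut).deriv,
    (hasDerivAt_uncurry_comp (g₁ := fun y => p y t) (g₂ := fun y => u y t) hf hpx hux).deriv]
  ring

theorem transportResidual_of_eq_add_integral {p H : ℝ → ℝ → ℝ} {X : ℝ → ℝ} {D L t0 t X' : ℝ}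
    (hL : 0 < L) (hp : Differentiable ℝ (uncurry p)) (hH : ContDiff ℝ 1 (uncurry H))
    (hX : HasDerivAt X X' t) (ht : t0 ≤ t)
    (hpdef : ∀ x ∈ Icc 0 L, ∀ s, t0 ≤ s → p x s = X s + D * ∫ y in 0..x, H y s) :
    ∀ x ∈ Icc 0 L, transportResidual D p x t
      = D * (X' - H 0 t) + D * ∫ y in 0..x, transportResidual D H y t := by
  intro x hx
  have hslice {G : ℝ × ℝ → ℝ} (hG : Continuous G) : Continuous fun y => G (y, t) :=
    hG.comp (continuous_id.prodMk continuous_const)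
  have hHt : Continuous fun y => deriv (fun s => H y s) t := hslice hH.continuous_deriv_right
  have hHx : Continuous fun y => deriv (fun y => H y t) y := hslice hH.continuous_deriv_left
  have hpt : deriv (fun s => p x s) t = X' + D * ∫ y in 0..x, deriv (fun s => H y s) t :=
    deriv_eq_of_hasDerivAt_of_eqOn (hasDerivAt_uncurry_right (hp _)).differentiableAt
      (hX.add ((hH.hasDerivAt_intervalIntegral 0 x t).const_mul D))
      (fun s hs => hpdef x hx s hs) ht (uniqueDiffOn_Ici t0 t ht)
  have hpx : deriv (fun y => p y t) x = D * H x t :=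
    deriv_eq_of_hasDerivAt_of_eqOn (hasDerivAt_uncurry_left (hp _)).differentiableAt
      ((((hslice hH.continuous).integral_hasStrictDerivAt 0 x).hasDerivAt.const_mul D).const_add
        (X t))
      (fun y hy => hpdef y hy t ht) hx (uniqueDiffOn_Icc hL x hx)
  have hHftc : ∫ y in 0..x, deriv (fun y => H y t) y = H x t - H 0 t :=
    integral_deriv_eq_sub
      (fun y _ => (hasDerivAt_uncurry_left (hH.differentiable one_ne_zero _)).differentiableAt)
      (hHx.intervalIntegrable _ _)
  simp only [transportResidual]
  rw [integral_sub ((hHt.intervalIntegrable _ _).const_mul D) (hHx.intervalIntegrable _ _),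
    intervalIntegral.integral_const_mul, hpt, hpx, hHftc]
  ring

theorem nonlinear_predictor_transport_equation_general
    (D : ℝ) (t0 : ℝ)
    (f : ℝ → ℝ → ℝ) (hf : ContDiff ℝ 1 (Function.uncurry f))
    (uh : ℝ → ℝ → ℝ) (huh : ContDiff ℝ 1 (Function.uncurry uh))
    -- the observer transport equation D̂ û_t = û_x
    (huhPDE : ∀ x t, D * deriv (fun s => uh x s) t = deriv (fun y => uh y t) x)
    (ut0 : ℝ → ℝ)
    (X : ℝ → ℝ)
    -- the plant X'(t) = f(X(t), û(0,t) + ũ₀(t))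
    (hX : ∀ t, t0 ≤ t → HasDerivAt X (f (X t) (uh 0 t + ut0 t)) t)
    (ph : ℝ → ℝ → ℝ) (hph : ContDiff ℝ 1 (Function.uncurry ph))
    -- the predictor p̂(x,t) = X(t) + D̂ ∫₀ˣ f(p̂(y,t), û(y,t)) dy
    (hpdef : ∀ x ∈ Icc (0 : ℝ) 1, ∀ t, t0 ≤ t →
      ph x t = X t + D * ∫ y in (0 : ℝ)..x, f (ph y t) (uh y t)) :
    ∀ x ∈ Icc (0 : ℝ) 1, ∀ t, t0 ≤ t →
      D * deriv (fun s => ph x s) t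
        = deriv (fun y => ph y t) x
          + D * Real.exp (D * ∫ y in (0 : ℝ)..x,
                deriv (fun z => f z (uh y t)) (ph y t))
            * (f (X t) (uh 0 t + ut0 t) - f (X t) (uh 0 t)) := by
  intro x hx t ht
  have hph0 : ph 0 t = X t := by simpa using hpdef 0 ⟨le_rfl, zero_le_one⟩ t ht
  have hH : ContDiff ℝ 1 (uncurry fun y s => f (ph y s) (uh y s)) := hf.comp (hph.prodMk huh)
  have hslice : Continuous fun y : ℝ => (y, t) := continuous_id.prodMk continuous_const
  have ha : Continuous fun y => D * deriv (fun z => f z (uh y t)) (ph y t) :=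
    continuous_const.mul <| hf.continuous_deriv_left.comp <|
      (hph.continuous.comp hslice).prodMk (huh.continuous.comp hslice)
  have hg : Continuous fun y => transportResidual D ph y t :=
    (continuous_const.mul (hph.continuous_deriv_right.comp hslice)).sub
      (hph.continuous_deriv_left.comp hslice)
  have hresidual (y : ℝ) : transportResidual D (fun y s => f (ph y s) (uh y s)) y t
      = deriv (fun z => f z (uh y t)) (ph y t) * transportResidual D ph y t := by
    have huh0 : transportResidual D uh y t = 0 := sub_eq_zero.2 (huhPDE y t)
    rw [transportResidual_comp (hf.differentiable one_ne_zero _) (hph.differentiable one_ne_zero _)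
      (huh.differentiable one_ne_zero _), huh0, mul_zero, add_zero]
  have hvolterra : ∀ y ∈ Icc (0 : ℝ) 1, transportResidual D ph y t
      = D * (f (X t) (uh 0 t + ut0 t) - f (X t) (uh 0 t))
        + ∫ z in (0 : ℝ)..y,
            D * deriv (fun w => f w (uh z t)) (ph z t) * transportResidual D ph z t := by
    intro y hy
    rw [transportResidual_of_eq_add_integral one_pos (hph.differentiable one_ne_zero) hH (hX t ht)
      ht hpdef y hy]
    simp only [hresidual, hph0, mul_assoc, intervalIntegral.integral_const_mul]
  have hsol := eq_mul_exp_integral_of_eq_add_integral ha hg hvolterra x hx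
  rw [intervalIntegral.integral_const_mul] at hsol
  unfold transportResidual at hsol
  linear_combination hsol

/-- Transport equation satisfied by the nonlinear predictor (scalar state
case, Lemma B.1):
`D̂ p̂_t = p̂_x + D̂ exp(D̂ ∫₀ˣ f_ρ(p̂,û)) (f(X, û(0)+ũ₀) - f(X, û(0)))`. -/
theorem nonlinear_predictor_transport_equation
    (D : ℝ) (hD : 0 < D) (t0 : ℝ)
    (f : ℝ → ℝ → ℝ) (hf : ContDiff ℝ 1 (Function.uncurry f))
    (uh : ℝ → ℝ → ℝ) (huh : ContDiff ℝ 1 (Function.uncurry uh))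
    -- the observer transport equation D̂ û_t = û_x
    (huhPDE : ∀ x t, D * deriv (fun s => uh x s) t = deriv (fun y => uh y t) x)
    (ut0 : ℝ → ℝ) (hut0 : Continuous ut0)
    (X : ℝ → ℝ)
    -- the plant X'(t) = f(X(t), û(0,t) + ũ₀(t))
    (hX : ∀ t, t0 ≤ t → HasDerivAt X (f (X t) (uh 0 t + ut0 t)) t)
    (ph : ℝ → ℝ → ℝ) (hph : ContDiff ℝ 1 (Function.uncurry ph))
    -- the predictor p̂(x,t) = X(t) + D̂ ∫₀ˣ f(p̂(y,t), û(y,t)) dy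
    (hpdef : ∀ x ∈ Icc (0 : ℝ) 1, ∀ t, t0 ≤ t →
      ph x t = X t + D * ∫ y in (0 : ℝ)..x, f (ph y t) (uh y t)) :
    ∀ x ∈ Icc (0 : ℝ) 1, ∀ t, t0 ≤ t →
      D * deriv (fun s => ph x s) t
        = deriv (fun y => ph y t) x
          + D * Real.exp (D * ∫ y in (0 : ℝ)..x,
                deriv (fun z => f z (uh y t)) (ph y t))
            * (f (X t) (uh 0 t + ut0 t) - f (X t) (uh 0 t)) :=
  nonlinear_predictor_transport_equation_general D t0 f hf uh huh huhPDE ut0 X hX ph hph hpdef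
end
end

section
/- Bound on the predictor state under strong forward completeness: let f : R^n x R -> R^n be twice continuously differentiable with f(0,0) = 0 and satisfying Assumption 1, let D_hat > 0, and let alpha_star be a class K-infinity function with D_hat * e^{D_hat} * alpha3(s) <= alpha_star(s) for all s >= 0. Then there exists a class K-infinity function alpha6 such that for every X in R^n, every continuous u_hat : [0,1] -> R, and every continuous p_hat : [0,1] -> R^n satisfying p_hat(x) = X + D_hat * integral from 0 to x of f( p_hat(y), u_hat(y) ) dy for all x in [0,1], it holds that |p_hat(x)| <= alpha6( |X| + integral from 0 to 1 of alpha_star(|u_hat(y)|) dy ) for all x in [0,1]. -/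
open MeasureTheory intervalIntegral Set Filter
open Topology

noncomputable section

/-- A class `K∞` function: continuous, strictly increasing and zero at zero on
`[0,∞)`, and unbounded. -/
def ClassKInf (α : ℝ → ℝ) : Prop :=
  ContinuousOn α (Ici 0) ∧ StrictMonoOn α (Ici 0) ∧ α 0 = 0 ∧
    Tendsto α atTop atTop

lemma kinf_nonneg {α : ℝ → ℝ} (h : ClassKInf α) {s : ℝ} (hs : 0 ≤ s) : 0 ≤ α s := by
  obtain ⟨_, hm, h0, _⟩ := h
  rcases hs.eq_or_lt with rfl | hs'
  · exact h0.ge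
  · exact le_of_lt (h0 ▸ hm self_mem_Ici hs'.le hs')

lemma kinf_surj {α : ℝ → ℝ} (h : ClassKInf α) {r : ℝ} (hr : 0 ≤ r) :
    ∃ t, 0 ≤ t ∧ α t = r := by
  obtain ⟨hc, hm, h0, ht⟩ := h
  obtain ⟨M, hMr, hM0⟩ := ((ht.eventually_ge_atTop r).and (eventually_ge_atTop (0:ℝ))).exists
  have : r ∈ α '' Icc 0 M :=
    intermediate_value_Icc hM0 (hc.mono (Icc_subset_Ici_self)) ⟨by rw [h0]; exact hr, hMr⟩
  obtain ⟨t, ht', rfl⟩ := this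
  exact ⟨t, ht'.1, rfl⟩

lemma kinf_inverse {α : ℝ → ℝ} (h : ClassKInf α) :
    ∃ β : ℝ → ℝ, Continuous β ∧ StrictMono β ∧ β 0 = 0 ∧ Tendsto β atTop atTop ∧
      (∀ t r, 0 ≤ t → α t ≤ r → t ≤ β r) := by
  classical
  set A : ℝ → ℝ := fun s => if 0 ≤ s then α s else s with hA
  have hA0 : A 0 = α 0 := by simp [hA]
  have hsm : StrictMono A := by
    intro a b hab
    by_cases ha : 0 ≤ a
    · have hb : 0 ≤ b := ha.trans hab.le
      simpa [hA, ha, hb] using h.2.1 ha hb hab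
    · by_cases hb : 0 ≤ b
      · have : a < α b := by
          have h0b : α 0 ≤ α b := by
            rcases hb.eq_or_lt with rfl | hb'
            · exact le_rfl
            · exact le_of_lt (h.2.1 self_mem_Ici hb hb')
          have : (0:ℝ) ≤ α b := by rw [← h.2.2.1]; exact h0b
          linarith [not_le.mp ha]
        simpa [hA, ha, hb] using this
      · simpa [hA, ha, hb] using hab
  have hsurj : Function.Surjective A := by
    intro r
    by_cases hr : 0 ≤ r
    · obtain ⟨t, ht0, htr⟩ := kinf_surj h hr
      exact ⟨t, by simp [hA, ht0, htr]⟩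
    · exact ⟨r, by simp [hA, hr]⟩
  set β := Function.invFun A with hβ
  have hright : ∀ r, A (β r) = r := fun r => Function.invFun_eq (hsurj r)
  have hleft : ∀ t, β (A t) = t := fun t => hsm.injective (hright (A t))
  have hβsm : StrictMono β := by
    intro a b hab
    have : A (β a) < A (β b) := by rw [hright, hright]; exact hab
    exact (hsm.lt_iff_lt).mp this
  have hβsurj : Function.Surjective β := fun t => ⟨A t, hleft t⟩
  refine ⟨β, hβsm.monotone.continuous_of_surjective hβsurj, hβsm, ?_, ?_, ?_⟩
  · have : A 0 = 0 := by rw [hA0, h.2.2.1]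
    conv_lhs => rw [← this]
    exact hleft 0
  · refine tendsto_atTop_atTop.mpr fun b => ⟨A b, fun a ha => ?_⟩
    have : A b ≤ A (β a) := by rw [hright]; exact ha
    exact (hsm.le_iff_le).mp this
  · intro t r ht hle
    have : A t ≤ A (β r) := by rw [hright]; simpa [hA, ht] using hle
    exact (hsm.le_iff_le).mp this

/-- Bound on the nonlinear predictor state under strong forward completeness
(Lemma B.2). -/
theorem predictor_state_bound
    (n : ℕ) (D : ℝ) (hD : 0 < D)
    (f : EuclideanSpace ℝ (Fin n) → ℝ → EuclideanSpace ℝ (Fin n))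
    (hf : ContDiff ℝ 2 (fun p : EuclideanSpace ℝ (Fin n) × ℝ => f p.1 p.2))
    (hf0 : f 0 0 = 0)
    -- Assumption 1 (strong forward completeness)
    (R : EuclideanSpace ℝ (Fin n) → ℝ) (hR : ContDiff ℝ (⊤ : ℕ∞) R)
    (hR0 : R 0 = 0) (hRpos : ∀ X, X ≠ 0 → 0 < R X)
    (α1 α2 α3 : ℝ → ℝ)
    (hα1 : ClassKInf α1) (hα2 : ClassKInf α2) (hα3 : ClassKInf α3)
    (hsand : ∀ X, α1 ‖X‖ ≤ R X ∧ R X ≤ α2 ‖X‖)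
    (hfc : ∀ X ω, fderiv ℝ R X (f X ω) ≤ R X + α3 |ω|)
    -- the majorizing class K∞ function α*
    (αstar : ℝ → ℝ) (hαstar : ClassKInf αstar)
    (hmaj : ∀ s, 0 ≤ s → D * Real.exp D * α3 s ≤ αstar s) :
    ∃ α6 : ℝ → ℝ, ClassKInf α6 ∧
      ∀ (X : EuclideanSpace ℝ (Fin n)) (uh : ℝ → ℝ)
        (ph : ℝ → EuclideanSpace ℝ (Fin n)),
        ContinuousOn uh (Icc 0 1) → ContinuousOn ph (Icc 0 1) →
        (∀ x ∈ Icc (0 : ℝ) 1,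
          ph x = X + D • ∫ y in (0 : ℝ)..x, f (ph y) (uh y)) →
        ∀ x ∈ Icc (0 : ℝ) 1,
          ‖ph x‖ ≤ α6 (‖X‖ + ∫ y in (0 : ℝ)..1, αstar |uh y|) := by
  obtain ⟨β, hβc, hβsm, hβ0, hβtop, hβinv⟩ := kinf_inverse hα1
  set E : ℝ := Real.exp D with hE
  have hE1 : 1 ≤ E := by
    rw [hE]; simpa using Real.exp_le_exp.mpr hD.le
  have hE0 : 0 < E := lt_of_lt_of_le one_pos hE1
  refine ⟨fun s => β (E * α2 s + s), ⟨?_, ?_, ?_, ?_⟩, ?_⟩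
  · -- continuity
    exact hβc.comp_continuousOn ((continuousOn_const.mul hα2.1).add continuousOn_id)
  · -- strict mono
    intro a ha b hb hab
    exact hβsm (by
      have := hα2.2.1 ha hb hab
      nlinarith)
  · simp [hα2.2.2.1, hβ0]
  · -- tendsto atTop
    refine tendsto_atTop_mono' atTop ?_ hβtop
    filter_upwards [eventually_ge_atTop (0:ℝ)] with s hs
    have h2 : 0 ≤ α2 s := kinf_nonneg hα2 hs
    exact hβsm.monotone (by nlinarith)
  · -- main estimate
    intro X uh ph huh hph heq x hx
    set g : ℝ → EuclideanSpace ℝ (Fin n) := fun y => f (ph y) (uh y) with hg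
    have hgc : ContinuousOn g (Icc 0 1) :=
      (hf.continuous.comp_continuousOn (hph.prodMk huh) :)
    have hRd : Differentiable ℝ R := hR.differentiable (by simp)
    set V : ℝ → ℝ := fun t => R (ph t) with hV
    have hVc : ContinuousOn V (Icc 0 1) := hR.continuous.comp_continuousOn hph
    set q : ℝ → ℝ := fun y => D * Real.exp (-D * y) * α3 |uh y| with hq
    have hA3c : ContinuousOn (fun y => α3 |uh y|) (Icc 0 1) :=
      hα3.1.comp (continuous_abs.comp_continuousOn huh) (fun y _ => mem_Ici.mpr (abs_nonneg _))
    have hqc : ContinuousOn q (Icc 0 1) :=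
      ((continuous_const.mul ((Real.continuous_exp.comp
        (continuous_const.mul continuous_id)))).continuousOn).mul hA3c
    have hA3nn : ∀ y, 0 ≤ α3 |uh y| := fun y => kinf_nonneg hα3 (abs_nonneg _)
    -- sub-interval integrability helper
    have hsub : ∀ (h : ℝ → ℝ), ContinuousOn h (Icc 0 1) → ∀ a b : ℝ,
        a ∈ Icc (0:ℝ) 1 → b ∈ Icc (0:ℝ) 1 → IntervalIntegrable h volume a b := by
      intro h hc a b ha hb
      refine (hc.mono ?_).intervalIntegrable
      intro z hz
      rcases le_total a b with hab | hab
      · rw [uIcc_of_le hab] at hz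
        exact ⟨ha.1.trans hz.1, hz.2.trans hb.2⟩
      · rw [uIcc_of_ge hab] at hz
        exact ⟨hb.1.trans hz.1, hz.2.trans ha.2⟩
    have hsubE : ∀ (h : ℝ → EuclideanSpace ℝ (Fin n)), ContinuousOn h (Icc 0 1) → ∀ a b : ℝ,
        a ∈ Icc (0:ℝ) 1 → b ∈ Icc (0:ℝ) 1 → IntervalIntegrable h volume a b := by
      intro h hc a b ha hb
      refine (hc.mono ?_).intervalIntegrable
      intro z hz
      rcases le_total a b with hab | hab
      · rw [uIcc_of_le hab] at hz
        exact ⟨ha.1.trans hz.1, hz.2.trans hb.2⟩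
      · rw [uIcc_of_ge hab] at hz
        exact ⟨hb.1.trans hz.1, hz.2.trans ha.2⟩
    have h01 : (0:ℝ) ∈ Icc (0:ℝ) 1 := ⟨le_rfl, zero_le_one⟩
    have h11 : (1:ℝ) ∈ Icc (0:ℝ) 1 := ⟨zero_le_one, le_rfl⟩
    have hph0 : ph 0 = X := by
      have := heq 0 h01
      simpa using this
    -- the Lyapunov-type decreasing quantity
    set W : ℝ → ℝ := fun t => Real.exp (-D * t) * V t - ∫ y in (0:ℝ)..t, q y with hW
    have hWc : ContinuousOn W (Icc 0 1) := by
      refine ContinuousOn.sub ?_ ?_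
      · exact ((Real.continuous_exp.comp (continuous_const.mul continuous_id)).continuousOn).mul hVc
      · have hint : IntegrableOn q (uIcc (0:ℝ) 1) volume := by
          rw [uIcc_of_le zero_le_one]
          exact hqc.integrableOn_Icc
        have := continuousOn_primitive_interval (a := (0:ℝ)) (b := (1:ℝ)) (f := q) hint
        rwa [uIcc_of_le zero_le_one] at this
    have key : ∀ z ∈ Ioo (0:ℝ) 1, HasDerivAt W
        ((Real.exp (-D * z) * (-D)) * V z
          + Real.exp (-D * z) * (fderiv ℝ R (ph z) (D • g z)) - q z) z := by
      intro z hz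
      have hznb : Icc (0:ℝ) 1 ∈ 𝓝 z := Icc_mem_nhds hz.1 hz.2
      have hzI : z ∈ Icc (0:ℝ) 1 := Ioo_subset_Icc_self hz
      -- derivative of ph
      have hgcz : ContinuousAt g z := hgc.continuousAt hznb
      have hmeas : StronglyMeasurableAtFilter g (𝓝 z) volume :=
        ⟨Ioo 0 1, Ioo_mem_nhds hz.1 hz.2,
          (hgc.mono Ioo_subset_Icc_self).aestronglyMeasurable measurableSet_Ioo⟩
      have hderI : HasDerivAt (fun u => ∫ y in (0:ℝ)..u, g y) (g z) z :=
        intervalIntegral.integral_hasDerivAt_right (hsubE g hgc 0 z h01 hzI) hmeas hgcz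
      have hphd : HasDerivAt ph (D • g z) z := by
        have h1 : HasDerivAt (fun u => X + D • ∫ y in (0:ℝ)..u, g y) (D • g z) z :=
          (hderI.const_smul D).const_add X
        refine h1.congr_of_eventuallyEq ?_
        filter_upwards [hznb] with y hy
        exact heq y hy
      -- derivative of V
      have hVd : HasDerivAt V (fderiv ℝ R (ph z) (D • g z)) z :=
        (hRd (ph z)).hasFDerivAt.comp_hasDerivAt z hphd
      -- derivative of exponential factor
      have hexpd : HasDerivAt (fun t => Real.exp (-D * t)) (Real.exp (-D * z) * (-D)) z := by
        have h2 : HasDerivAt (fun t : ℝ => -D * t) (-D) z := by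
          simpa using (hasDerivAt_id z).const_mul (-D)
        exact h2.exp
      -- derivative of the integral term
      have hqz : ContinuousAt q z := hqc.continuousAt hznb
      have hqmeas : StronglyMeasurableAtFilter q (𝓝 z) volume :=
        ⟨Ioo 0 1, Ioo_mem_nhds hz.1 hz.2,
          (hqc.mono Ioo_subset_Icc_self).aestronglyMeasurable measurableSet_Ioo⟩
      have hqd : HasDerivAt (fun u => ∫ y in (0:ℝ)..u, q y) (q z) z :=
        intervalIntegral.integral_hasDerivAt_right (hsub q hqc 0 z h01 hzI) hqmeas hqz
      exact (hexpd.mul hVd).sub hqd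
    have hWant : AntitoneOn W (Icc 0 1) := by
      refine antitoneOn_of_deriv_nonpos (convex_Icc 0 1) hWc ?_ ?_
      · rw [interior_Icc]
        exact fun z hz => ((key z hz).differentiableAt).differentiableWithinAt
      · rw [interior_Icc]
        intro z hz
        rw [(key z hz).deriv]
        have hℓ : fderiv ℝ R (ph z) (D • g z) ≤ D * (V z + α3 |uh z|) := by
          have h3 := hfc (ph z) (uh z)
          have : fderiv ℝ R (ph z) (D • g z) = D * fderiv ℝ R (ph z) (g z) := by
            simp only [_root_.map_smul, smul_eq_mul]
          rw [this]
          have := mul_le_mul_of_nonneg_left h3 hD.le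
          simpa [hV] using this
        have hez : 0 < Real.exp (-D * z) := Real.exp_pos _
        have hA3z : 0 ≤ α3 |uh z| := hA3nn z
        have hqz : q z = D * Real.exp (-D * z) * α3 |uh z| := rfl
        nlinarith [mul_le_mul_of_nonneg_left hℓ hez.le]
    -- consequence: W x ≤ W 0 = R X
    have hW0 : W 0 = R X := by
      simp [hW, hV, hph0]
    have hWx : W x ≤ R X := by
      rw [← hW0]
      exact hWant h01 hx hx.1
    -- bound the integral term
    have hqle : ∀ y ∈ Icc (0:ℝ) 1, q y ≤ D * α3 |uh y| := by
      intro y hy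
      have h4 : Real.exp (-D * y) ≤ 1 := by
        rw [← Real.exp_zero]
        apply Real.exp_le_exp.mpr
        nlinarith [hy.1]
      have := hA3nn y
      have h5 : Real.exp (-D * y) > 0 := Real.exp_pos _
      show D * Real.exp (-D * y) * α3 |uh y| ≤ D * α3 |uh y|
      nlinarith [mul_le_mul_of_nonneg_left (mul_le_mul_of_nonneg_right h4 this) hD.le]
    have hDA3c : ContinuousOn (fun y => D * α3 |uh y|) (Icc 0 1) :=
      continuousOn_const.mul hA3c
    have hIq : (∫ y in (0:ℝ)..x, q y) ≤ ∫ y in (0:ℝ)..1, D * α3 |uh y| := by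
      have step1 : (∫ y in (0:ℝ)..x, q y) ≤ ∫ y in (0:ℝ)..x, D * α3 |uh y| := by
        refine intervalIntegral.integral_mono_on hx.1 (hsub q hqc 0 x h01 hx)
          (hsub _ hDA3c 0 x h01 hx) ?_
        intro y hy
        exact hqle y ⟨hy.1, hy.2.trans hx.2⟩
      have step2 : (∫ y in (0:ℝ)..x, D * α3 |uh y|) ≤ ∫ y in (0:ℝ)..1, D * α3 |uh y| := by
        have hsplit : (∫ y in (0:ℝ)..x, D * α3 |uh y|) + (∫ y in x..(1:ℝ), D * α3 |uh y|)
            = ∫ y in (0:ℝ)..1, D * α3 |uh y| :=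
          intervalIntegral.integral_add_adjacent_intervals
            (hsub _ hDA3c 0 x h01 hx) (hsub _ hDA3c x 1 hx h11)
        have htail : 0 ≤ ∫ y in x..(1:ℝ), D * α3 |uh y| :=
          intervalIntegral.integral_nonneg hx.2 (fun y _ => by
            have := hA3nn y; positivity)
        linarith
      linarith
    -- unfold W x ≤ R X
    have hVx : Real.exp (-D * x) * V x ≤ R X + ∫ y in (0:ℝ)..1, D * α3 |uh y| := by
      have : Real.exp (-D * x) * V x - (∫ y in (0:ℝ)..x, q y) ≤ R X := hWx
      linarith
    have hRX0 : 0 ≤ R X := le_trans (kinf_nonneg hα1 (norm_nonneg X)) (hsand X).1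
    have hIDA3 : 0 ≤ ∫ y in (0:ℝ)..1, D * α3 |uh y| :=
      intervalIntegral.integral_nonneg zero_le_one (fun y _ => by
        have := hA3nn y; positivity)
    have hexpx : Real.exp (D * x) ≤ E := by
      rw [hE]
      apply Real.exp_le_exp.mpr
      nlinarith [hx.2, hx.1]
    have hVxE : V x ≤ E * R X + E * ∫ y in (0:ℝ)..1, D * α3 |uh y| := by
      have h6 : Real.exp (D * x) * (Real.exp (-D * x) * V x)
          ≤ Real.exp (D * x) * (R X + ∫ y in (0:ℝ)..1, D * α3 |uh y|) :=
        mul_le_mul_of_nonneg_left hVx (Real.exp_pos _).le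
      have h7 : Real.exp (D * x) * Real.exp (-D * x) = 1 := by
        rw [← Real.exp_add]; ring_nf; exact Real.exp_zero
      have h8 : Real.exp (D * x) * (R X + ∫ y in (0:ℝ)..1, D * α3 |uh y|)
          ≤ E * (R X + ∫ y in (0:ℝ)..1, D * α3 |uh y|) :=
        mul_le_mul_of_nonneg_right hexpx (by linarith)
      calc V x = Real.exp (D * x) * Real.exp (-D * x) * V x := by rw [h7]; ring
        _ = Real.exp (D * x) * (Real.exp (-D * x) * V x) := by ring
        _ ≤ Real.exp (D * x) * (R X + ∫ y in (0:ℝ)..1, D * α3 |uh y|) := h6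
        _ ≤ E * (R X + ∫ y in (0:ℝ)..1, D * α3 |uh y|) := h8
        _ = E * R X + E * ∫ y in (0:ℝ)..1, D * α3 |uh y| := by ring
    -- pull the constant into the integral and majorize by αstar
    have hstarc : ContinuousOn (fun y => αstar |uh y|) (Icc 0 1) :=
      hαstar.1.comp (continuous_abs.comp_continuousOn huh) (fun y _ => mem_Ici.mpr (abs_nonneg _))
    have hEDA : E * (∫ y in (0:ℝ)..1, D * α3 |uh y|) ≤ ∫ y in (0:ℝ)..1, αstar |uh y| := by
      rw [← intervalIntegral.integral_const_mul]
      refine intervalIntegral.integral_mono_on zero_le_one ?_ (hsub _ hstarc 0 1 h01 h11) ?_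
      · exact hsub _ (continuousOn_const.mul hDA3c) 0 1 h01 h11
      · intro y _
        have := hmaj |uh y| (abs_nonneg _)
        calc E * (D * α3 |uh y|) = D * Real.exp D * α3 |uh y| := by rw [hE]; ring
          _ ≤ αstar |uh y| := this
    set I : ℝ := ∫ y in (0:ℝ)..1, αstar |uh y| with hI
    have hI0 : 0 ≤ I :=
      intervalIntegral.integral_nonneg zero_le_one
        (fun y _ => kinf_nonneg hαstar (abs_nonneg _))
    set s : ℝ := ‖X‖ + I with hs
    have hs0 : 0 ≤ s := by positivity
    have hXs : ‖X‖ ≤ s := le_add_of_nonneg_right hI0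
    have hα2m : α2 ‖X‖ ≤ α2 s := by
      rcases hXs.eq_or_lt with h' | h'
      · rw [h']
      · exact le_of_lt (hα2.2.1 (norm_nonneg X) hs0 h')
    have hα2s0 : 0 ≤ α2 s := kinf_nonneg hα2 hs0
    have hfinal : α1 ‖ph x‖ ≤ E * α2 s + s := by
      have h9 : α1 ‖ph x‖ ≤ V x := (hsand (ph x)).1
      have h10 : R X ≤ α2 ‖X‖ := (hsand X).2
      have h11' : E * R X ≤ E * α2 s :=
        mul_le_mul_of_nonneg_left (h10.trans hα2m) hE0.le
      have h12 : I ≤ s := le_add_of_nonneg_left (norm_nonneg X)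
      calc α1 ‖ph x‖ ≤ V x := h9
        _ ≤ E * R X + E * ∫ y in (0:ℝ)..1, D * α3 |uh y| := hVxE
        _ ≤ E * α2 s + I := by linarith [hEDA]
        _ ≤ E * α2 s + s := by linarith
    exact hβinv ‖ph x‖ (E * α2 s + s) (norm_nonneg _) hfinal
end
end
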